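/- arXiv:1602.00349 — 15 statements merged into one kernel-verified Lean document; each statement's English description precedes it below -/
import Mathlib

section
/- Oettli–Prager theorem: Let A_c ∈ ℝ^{m×n}, Δ ∈ ℝ^{m×n} with Δ ≥ 0 entrywise, b_c ∈ ℝ^m and δ ∈ ℝ^m with δ ≥ 0 entrywise. For a vector x ∈ ℝ^n, there exist a real matrix A with |A − A_c| ≤ Δ entrywise and a real vector b with |b − b_c| ≤ δ entrywise such that A x = b, if and only if |A_c x − b_c| ≤ Δ |x| + δ holds componentwise (where |x| denotes the vector of absolute values of the entries of x). -/
/-- **Oettli–Prager theorem.** There exist `A` in the interval matrix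
`[A_c - Δ, A_c + Δ]` and `b` in the interval vector `[b_c - δ, b_c + δ]` with
`A x = b` iff `|A_c x - b_c| ≤ Δ |x| + δ` componentwise. -/
theorem oettli_prager {m n : ℕ} (Ac Δ : Matrix (Fin m) (Fin n) ℝ)
    (bc δ : Fin m → ℝ) (hΔ : ∀ i j, 0 ≤ Δ i j) (hδ : ∀ i, 0 ≤ δ i)
    (x : Fin n → ℝ) :
    (∃ (A : Matrix (Fin m) (Fin n) ℝ) (b : Fin m → ℝ),
        (∀ i j, |A i j - Ac i j| ≤ Δ i j) ∧ (∀ i, |b i - bc i| ≤ δ i) ∧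
        A.mulVec x = b) ↔
      (∀ i, |Ac.mulVec x i - bc i| ≤ Δ.mulVec (fun j => |x j|) i + δ i) := by
  constructor
  · rintro ⟨A, b, hA, hb, hAxb⟩ i
    have key : Ac.mulVec x i - bc i
        = (∑ j, (Ac i j - A i j) * x j) + (b i - bc i) := by
      have : A.mulVec x i = b i := congrFun hAxb i
      simp only [Matrix.mulVec, dotProduct] at this ⊢
      simp only [sub_mul]
      rw [Finset.sum_sub_distrib]
      linarith
    rw [key]
    calc |(∑ j, (Ac i j - A i j) * x j) + (b i - bc i)|
        ≤ |∑ j, (Ac i j - A i j) * x j| + |b i - bc i| := abs_add_le _ _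
      _ ≤ (∑ j, |(Ac i j - A i j) * x j|) + |b i - bc i| := by
          gcongr; exact Finset.abs_sum_le_sum_abs _ _
      _ ≤ (∑ j, Δ i j * |x j|) + δ i := by
          gcongr with j
          · rw [abs_mul]
            exact mul_le_mul_of_nonneg_right
              (by rw [abs_sub_comm]; exact hA i j) (abs_nonneg _)
          · exact hb i
      _ = Δ.mulVec (fun j => |x j|) i + δ i := by
          simp [Matrix.mulVec, dotProduct]
  · intro h
    set r : Fin m → ℝ := fun i => Ac.mulVec x i - bc i with hr
    set d : Fin m → ℝ := fun i => Δ.mulVec (fun j => |x j|) i + δ i with hd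
    have hd0 : ∀ i, 0 ≤ d i := fun i => (abs_nonneg _).trans (h i)
    set t : Fin m → ℝ := fun i => if d i = 0 then 0 else r i / d i with ht
    have htle : ∀ i, |t i| ≤ 1 := by
      intro i
      by_cases hdi : d i = 0
      · simp [ht, hdi]
      · have hdpos : 0 < d i := lt_of_le_of_ne (hd0 i) (Ne.symm hdi)
        simp only [ht, hdi, if_false, abs_div, abs_of_pos hdpos]
        rw [div_le_one hdpos]
        exact h i
    have htd : ∀ i, t i * d i = r i := by
      intro i
      by_cases hdi : d i = 0
      · have : |r i| ≤ 0 := by rw [← hdi]; exact h i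
        have : r i = 0 := abs_nonpos_iff.mp this
        simp [ht, hdi, this]
      · simp [ht, hdi, div_mul_cancel₀ _ hdi]
    set s : Fin n → ℝ := fun j => if 0 ≤ x j then 1 else -1 with hs
    have hsx : ∀ j, s j * x j = |x j| := by
      intro j
      by_cases hj : 0 ≤ x j
      · simp [hs, hj, abs_of_nonneg hj]
      · simp [hs, hj, abs_of_neg (not_le.mp hj)]
    refine ⟨fun i j => Ac i j - t i * Δ i j * s j, fun i => bc i + t i * δ i,
      ?_, ?_, ?_⟩
    · intro i j
      have : |Ac i j - t i * Δ i j * s j - Ac i j| = |t i| * Δ i j * |s j| := by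
        rw [show Ac i j - t i * Δ i j * s j - Ac i j = -(t i * Δ i j * s j) by ring,
          abs_neg, abs_mul, abs_mul, abs_of_nonneg (hΔ i j)]
      rw [this]
      have hsj : |s j| = 1 := by
        by_cases hj : 0 ≤ x j <;> simp [hs, hj]
      rw [hsj, mul_one]
      calc |t i| * Δ i j ≤ 1 * Δ i j :=
            mul_le_mul_of_nonneg_right (htle i) (hΔ i j)
        _ = Δ i j := one_mul _
    · intro i
      have : |bc i + t i * δ i - bc i| = |t i| * δ i := by
        rw [show bc i + t i * δ i - bc i = t i * δ i by ring, abs_mul,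
          abs_of_nonneg (hδ i)]
      rw [this]
      calc |t i| * δ i ≤ 1 * δ i :=
            mul_le_mul_of_nonneg_right (htle i) (hδ i)
        _ = δ i := one_mul _
    · funext i
      simp only [Matrix.mulVec, dotProduct] at *
      have expand : ∑ j, (Ac i j - t i * Δ i j * s j) * x j
          = (∑ j, Ac i j * x j) - t i * ∑ j, Δ i j * |x j| := by
        rw [Finset.mul_sum, ← Finset.sum_sub_distrib]
        congr 1; funext j
        rw [← hsx j]; ring
      rw [expand]
      have := htd i
      simp only [hr, hd, Matrix.mulVec, dotProduct] at this
      linarith [this]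
end

section
/- An interval matrix [A_c − Δ, A_c + Δ], where A_c, Δ ∈ ℝ^{n×n} and Δ ≥ 0 entrywise, is regular (i.e., every real matrix A with |A − A_c| ≤ Δ entrywise is invertible) if and only if the only vector x ∈ ℝ^n satisfying |A_c x| ≤ Δ |x| componentwise is x = 0. -/
/-!
Regularity fails iff some `A` in the interval matrix has a nonzero kernel vector `x`. For such
`A` and `x`, `|A_c x| = |(A_c - A) x| ≤ Δ |x|`. Conversely (Oettli–Prager), if
`|A_c x| ≤ Δ |x|`, then `A := A_c - diag(d) Δ diag(sign x)` with `d = A_c x / (Δ |x|)`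
lies in the interval matrix (as `|d| ≤ 1`) and kills `x`, since `diag(sign x) x = |x|`.
-/

open Matrix

variable {K : Type*} [Field K] {m n : Type*} [Fintype n]

theorem Matrix.not_isUnit_iff_exists_mulVec_eq_zero [DecidableEq n] {A : Matrix n n K} :
    ¬IsUnit A ↔ ∃ x ≠ 0, A *ᵥ x = 0 := by
  rw [isUnit_iff_isUnit_det, isUnit_iff_ne_zero, not_not, exists_mulVec_eq_zero_iff]

variable [LinearOrder K] [IsStrictOrderedRing K]

theorem abs_signType_cast_le_one (t : K) : |(SignType.sign t : K)| ≤ 1 := by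
  rcases lt_trichotomy t 0 with h | rfl | h <;> simp [*]

theorem Matrix.abs_mulVec_sub_mulVec_le {A B Δ : Matrix m n K}
    (h : ∀ i j, |A i j - B i j| ≤ Δ i j) (x : n → K) (i : m) :
    |(A *ᵥ x) i - (B *ᵥ x) i| ≤ (Δ *ᵥ fun j => |x j|) i := by
  rw [← Pi.sub_apply, ← sub_mulVec]
  calc |∑ j, (A - B) i j * x j| ≤ ∑ j, |(A - B) i j * x j| := Finset.abs_sum_le_sum_abs _ _
    _ ≤ ∑ j, Δ i j * |x j| := by
        gcongr with j
        rw [abs_mul]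
        exact mul_le_mul_of_nonneg_right (h i j) (abs_nonneg _)

/-- The Oettli–Prager construction. -/
theorem Matrix.exists_abs_sub_le_and_mulVec_eq_zero [Fintype m] [DecidableEq m] [DecidableEq n]
    {Ac Δ : Matrix m n K} (hΔ : ∀ i j, 0 ≤ Δ i j) {x : n → K}
    (hx : ∀ i, |(Ac *ᵥ x) i| ≤ (Δ *ᵥ fun j => |x j|) i) :
    ∃ A : Matrix m n K, (∀ i j, |A i j - Ac i j| ≤ Δ i j) ∧ A *ᵥ x = 0 := by
  set s := Δ *ᵥ fun j => |x j|
  set d : m → K := fun i => (Ac *ᵥ x) i / s i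
  have hd : ∀ i, |d i| ≤ 1 := fun i => by
    rw [abs_div, abs_of_nonneg ((abs_nonneg _).trans (hx i))]
    exact div_le_one_of_le₀ (hx i) ((abs_nonneg _).trans (hx i))
  -- Where `s i = 0`, `d i = 0` by `_ / 0 = 0`, and `hx` forces `(Ac *ᵥ x) i = 0` as well.
  have hds : ∀ i, d i * s i = (Ac *ᵥ x) i := fun i => by
    by_cases hs : s i = 0
    · have := hx i
      rw [hs, abs_nonpos_iff] at this
      simp [d, hs, this]
    · exact div_mul_cancel₀ _ hs
  refine ⟨Ac - diagonal d * Δ * diagonal fun j => (SignType.sign (x j) : K), fun i j => ?_, ?_⟩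
  · rw [sub_apply, sub_sub_cancel_left, abs_neg, mul_diagonal, diagonal_mul, abs_mul, abs_mul,
      abs_of_nonneg (hΔ i j)]
    exact (mul_le_of_le_one_right (mul_nonneg (abs_nonneg _) (hΔ i j))
      (abs_signType_cast_le_one _)).trans (mul_le_of_le_one_left (hΔ i j) (hd i))
  · have hsign : (diagonal fun j => (SignType.sign (x j) : K)) *ᵥ x = fun j => |x j| := by
      ext j; rw [mulVec_diagonal, sign_mul_self]
    ext i
    rw [sub_mulVec, ← mulVec_mulVec, ← mulVec_mulVec, hsign, Pi.sub_apply, mulVec_diagonal,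
      hds, sub_self, Pi.zero_apply]

/-- The interval matrix `[A_c - Δ, A_c + Δ]` is regular (every matrix in it is
invertible) iff the only solution of `|A_c x| ≤ Δ |x|` is `x = 0`. -/
theorem regular_iff_trivial_solution {n : ℕ} (Ac Δ : Matrix (Fin n) (Fin n) ℝ)
    (hΔ : ∀ i j, 0 ≤ Δ i j) :
    (∀ A : Matrix (Fin n) (Fin n) ℝ, (∀ i j, |A i j - Ac i j| ≤ Δ i j) → IsUnit A) ↔
      (∀ x : Fin n → ℝ,
        (∀ i, |Ac.mulVec x i| ≤ Δ.mulVec (fun j => |x j|) i) → x = 0) := by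
  constructor
  · intro hreg x hx
    by_contra hx0
    obtain ⟨A, hA, hAx⟩ := exists_abs_sub_le_and_mulVec_eq_zero hΔ hx
    exact not_isUnit_iff_exists_mulVec_eq_zero.mpr ⟨x, hx0, hAx⟩ (hreg A hA)
  · intro htriv A hA
    by_contra hA_sing
    obtain ⟨x, hx0, hAx⟩ := not_isUnit_iff_exists_mulVec_eq_zero.mp hA_sing
    refine hx0 (htriv x fun i => ?_)
    simpa [hAx] using abs_mulVec_sub_mulVec_le hA x i
end

section
/- Sufficient condition for regularity (spectral radius condition): Let A_c, Δ ∈ ℝ^{n×n} with Δ ≥ 0 entrywise. If A_c is invertible and the spectral radius of the nonnegative matrix |A_c^{-1}| Δ (where |A_c^{-1}| is the entrywise absolute value of A_c^{-1}) is strictly less than 1, then every real matrix A with |A − A_c| ≤ Δ entrywise is invertible. -/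
/-!
If `A *ᵥ x = 0` with `x ≠ 0`, then `x = A_c⁻¹ (A_c - A) x` gives `|x| ≤ M |x|` for the nonnegative
matrix `M = |A_c⁻¹| Δ`, and iterating, `|x| ≤ M ^ k |x|` for every `k`. By Gelfand's formula,
`ρ(M) < 1` forces `M ^ k → 0`, hence `|x| ≤ 0`, a contradiction.
-/

open Filter Topology

theorem tendsto_pow_nhds_zero_of_forall_norm_lt_one_of_mem_spectrum {A : Type*} [NormedRing A]
    [NormedAlgebra ℂ A] [CompleteSpace A] (a : A) (ha : ∀ z ∈ spectrum ℂ a, ‖z‖ < 1) :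
    Tendsto (a ^ ·) atTop (𝓝 0) := by
  cases subsingleton_or_nontrivial A
  · simpa only [Subsingleton.elim _ (0 : A)] using tendsto_const_nhds
  have hρ : spectralRadius ℂ a < (1 : NNReal) :=
    spectrum.spectralRadius_lt_of_forall_lt a fun z hz => mod_cast ha z hz
  obtain ⟨r, hρr, hr1⟩ := ENNReal.lt_iff_exists_nnreal_btwn.mp hρ
  have hroot : ∀ᶠ k : ℕ in atTop, ‖a ^ k‖ ^ (k⁻¹ : ℝ) < r := by
    have hgelfand := spectrum.pow_norm_pow_one_div_tendsto_nhds_spectralRadius a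
    filter_upwards [hgelfand.eventually_lt_const hρr] with k hk
    simpa only [one_div] using (ENNReal.ofReal_lt_coe_iff (by positivity)).mp hk
  refine squeeze_zero_norm' ?_ (tendsto_pow_atTop_nhds_zero_of_lt_one r.2 (mod_cast hr1))
  filter_upwards [hroot, eventually_ne_atTop 0] with k hk hk0
  calc ‖a ^ k‖ = (‖a ^ k‖ ^ (k⁻¹ : ℝ)) ^ k := (Real.rpow_inv_natCast_pow (norm_nonneg _) hk0).symm
    _ ≤ (r : ℝ) ^ k := pow_le_pow_left₀ (by positivity) hk.le k

namespace Matrix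

variable {m n : Type*} [Fintype n]

section Order

variable {R : Type*}

theorem mulVec_mono_of_nonneg [Semiring R] [PartialOrder R] [IsOrderedRing R] {M : Matrix m n R}
    (hM : ∀ i j, 0 ≤ M i j) {v w : n → R} (hvw : v ≤ w) : M *ᵥ v ≤ M *ᵥ w :=
  fun i => Finset.sum_le_sum fun j _ => mul_le_mul_of_nonneg_left (hvw j) (hM i j)

theorem abs_mulVec_le [Ring R] [LinearOrder R] [IsOrderedRing R] {M N : Matrix m n R}
    (hMN : ∀ i j, |M i j| ≤ N i j) (v : n → R) : |M *ᵥ v| ≤ N *ᵥ |v| := fun i =>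
  (Finset.abs_sum_le_sum_abs _ _).trans <| Finset.sum_le_sum fun j _ => by
    rw [abs_mul]
    exact mul_le_mul_of_nonneg_right (hMN i j) (abs_nonneg _)

theorem abs_le_mulVec_abs_of_mulVec_eq_zero [Fintype m] [DecidableEq m] [Field R] [LinearOrder R]
    [IsStrictOrderedRing R] {A Ac Δ : Matrix m m R} (hAc : IsUnit Ac)
    (hA : ∀ i j, |A i j - Ac i j| ≤ Δ i j) {x : m → R} (hx : A *ᵥ x = 0) :
    |x| ≤ ((Ac⁻¹).map (|·|) * Δ) *ᵥ |x| := by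
  have hx_eq : x = Ac⁻¹ *ᵥ ((Ac - A) *ᵥ x) := by
    rw [sub_mulVec, hx, sub_zero, mulVec_mulVec,
      nonsing_inv_mul _ ((isUnit_iff_isUnit_det Ac).mp hAc), one_mulVec]
  calc |x| = |Ac⁻¹ *ᵥ ((Ac - A) *ᵥ x)| := congrArg _ hx_eq
    _ ≤ (Ac⁻¹).map (|·|) *ᵥ |(Ac - A) *ᵥ x| := abs_mulVec_le (fun _ _ => le_rfl) _
    _ ≤ (Ac⁻¹).map (|·|) *ᵥ (Δ *ᵥ |x|) :=
      mulVec_mono_of_nonneg (fun _ _ => abs_nonneg _) <|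
        abs_mulVec_le (fun i j => by simpa only [sub_apply, abs_sub_comm] using hA i j) x
    _ = ((Ac⁻¹).map (|·|) * Δ) *ᵥ |x| := mulVec_mulVec _ _ _

end Order

variable [DecidableEq n]

theorem tendsto_pow_nhds_zero_of_forall_norm_lt_one_of_mem_spectrum_map_ofReal
    (M : Matrix n n ℝ) (hM : ∀ z ∈ spectrum ℂ (M.map Complex.ofReal), ‖z‖ < 1) :
    Tendsto (M ^ ·) atTop (𝓝 0) := by
  let _ : NormedRing (Matrix n n ℂ) := Matrix.linftyOpNormedRing
  let _ : NormedAlgebra ℂ (Matrix n n ℂ) := Matrix.linftyOpNormedAlgebra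
  have hre : ∀ k : ℕ, M ^ k = ((M.map Complex.ofReal) ^ k).map Complex.re := fun k => by
    rw [show (Complex.ofReal : ℝ → ℂ) = Complex.ofRealHom from rfl, ← Matrix.map_pow, map_map]
    exact (map_id _).symm
  have hcont : Continuous fun N : Matrix n n ℂ => N.map Complex.re :=
    continuous_id.matrix_map Complex.continuous_re
  simpa only [hre, Function.comp_def] using (hcont.tendsto' 0 0 (Matrix.map_zero _ rfl)).comp
    (tendsto_pow_nhds_zero_of_forall_norm_lt_one_of_mem_spectrum _ hM)

theorem nonpos_of_le_mulVec_of_tendsto_pow {R : Type*} [Semiring R] [PartialOrder R]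
    [IsOrderedRing R] [TopologicalSpace R] [OrderClosedTopology R] [IsTopologicalSemiring R]
    {M : Matrix n n R} (hM : ∀ i j, 0 ≤ M i j) (hpow : Tendsto (M ^ ·) atTop (𝓝 0))
    {v : n → R} (hv : v ≤ M *ᵥ v) : v ≤ 0 := by
  have hiter : ∀ k : ℕ, v ≤ (M ^ k) *ᵥ v := by
    intro k
    induction k with
    | zero => rw [pow_zero, one_mulVec]
    | succ k ih =>
      calc v ≤ M *ᵥ v := hv
        _ ≤ M *ᵥ ((M ^ k) *ᵥ v) := mulVec_mono_of_nonneg hM ih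
        _ = (M ^ (k + 1)) *ᵥ v := by rw [mulVec_mulVec, pow_succ']
  have hlim : Tendsto (fun k : ℕ => (M ^ k) *ᵥ v) atTop (𝓝 0) := by
    have hcont : Continuous fun N : Matrix n n R => N *ᵥ v :=
      continuous_id.matrix_mulVec continuous_const
    simpa only [zero_mulVec, Function.comp_def] using (hcont.tendsto 0).comp hpow
  exact fun i => ge_of_tendsto' (tendsto_pi_nhds.mp hlim i) fun k => hiter k i

end Matrix

/-- Sufficient condition for regularity: if `A_c` is invertible and the spectral
radius of `|A_c⁻¹| Δ` is less than `1` (i.e. every complex eigenvalue of this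
matrix has modulus `< 1`), then every matrix in `[A_c - Δ, A_c + Δ]` is invertible. -/
theorem regular_of_spectralRadius_lt_one {n : ℕ} (Ac Δ : Matrix (Fin n) (Fin n) ℝ)
    (hΔ : ∀ i j, 0 ≤ Δ i j) (hAc : IsUnit Ac)
    (hρ : ∀ μ ∈ spectrum ℂ ((((Ac⁻¹).map (fun r => |r|)) * Δ).map (Complex.ofReal)),
      ‖μ‖ < 1) :
    ∀ A : Matrix (Fin n) (Fin n) ℝ, (∀ i j, |A i j - Ac i j| ≤ Δ i j) → IsUnit A := by
  intro A hA
  have hM : ∀ i j, 0 ≤ ((Ac⁻¹).map (|·|) * Δ) i j := fun i j => by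
    rw [Matrix.mul_apply]
    exact Finset.sum_nonneg fun l _ => mul_nonneg (abs_nonneg _) (hΔ l j)
  rw [Matrix.isUnit_iff_isUnit_det, isUnit_iff_ne_zero]
  intro hdet
  obtain ⟨x, hx0, hAx⟩ := Matrix.exists_mulVec_eq_zero_iff.mpr hdet
  have habs : |x| ≤ 0 := Matrix.nonpos_of_le_mulVec_of_tendsto_pow hM
    (Matrix.tendsto_pow_nhds_zero_of_forall_norm_lt_one_of_mem_spectrum_map_ofReal _ hρ)
    (Matrix.abs_le_mulVec_abs_of_mulVec_eq_zero hAc hA hAx)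
  exact hx0 (funext fun i => abs_nonpos_iff.mp (habs i))
end

section
/- Sufficient condition for regularity (singular value condition): Let A_c, Δ ∈ ℝ^{n×n} with Δ ≥ 0 entrywise. If the largest singular value of Δ is strictly less than the smallest singular value of A_c — equivalently, if there exists c ≥ 0 such that ‖Δ x‖₂ ≤ c‖x‖₂ for all x ∈ ℝ^n and ‖A_c x‖₂ > c‖x‖₂ for all nonzero x ∈ ℝ^n — then every real matrix A with |A − A_c| ≤ Δ entrywise is invertible. -/
/-- The Euclidean norm on `Fin n → ℝ`. -/
noncomputable def euclNorm {n : ℕ} (x : Fin n → ℝ) : ℝ :=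
  Real.sqrt (∑ i, x i ^ 2)

lemma euclNorm_mono {n : ℕ} {u v : Fin n → ℝ} (h : ∀ i, |u i| ≤ v i) :
    euclNorm u ≤ euclNorm v := by
  apply Real.sqrt_le_sqrt
  apply Finset.sum_le_sum
  intro i _
  have h1 : |u i| ≤ v i := h i
  have := abs_nonneg (u i)
  nlinarith [sq_abs (u i)]

lemma euclNorm_abs {n : ℕ} (x : Fin n → ℝ) :
    euclNorm (fun i => |x i|) = euclNorm x := by
  unfold euclNorm
  congr 1
  exact Finset.sum_congr rfl fun i _ => by rw [sq_abs]

/-- Sufficient condition for regularity: if the largest singular value of `Δ`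
is strictly less than the smallest singular value of `A_c` (formulated: there is
`c ≥ 0` with `‖Δ x‖₂ ≤ c ‖x‖₂` for all `x` and `‖A_c x‖₂ > c ‖x‖₂` for all
nonzero `x`), then every matrix in `[A_c - Δ, A_c + Δ]` is invertible. -/
theorem regular_of_singular_values {n : ℕ} (Ac Δ : Matrix (Fin n) (Fin n) ℝ)
    (hΔ : ∀ i j, 0 ≤ Δ i j)
    (h : ∃ c : ℝ, 0 ≤ c ∧ (∀ x : Fin n → ℝ, euclNorm (Δ.mulVec x) ≤ c * euclNorm x) ∧
      (∀ x : Fin n → ℝ, x ≠ 0 → c * euclNorm x < euclNorm (Ac.mulVec x))) :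
    ∀ A : Matrix (Fin n) (Fin n) ℝ, (∀ i j, |A i j - Ac i j| ≤ Δ i j) → IsUnit A := by
  intro A hA
  obtain ⟨c, hc, hΔle, hAc⟩ := h
  rw [Matrix.isUnit_iff_isUnit_det, isUnit_iff_ne_zero]
  intro hdet
  obtain ⟨x, hx, hAx⟩ := (Matrix.exists_mulVec_eq_zero_iff).2 hdet
  -- Ac x = (Ac - A) x since A x = 0
  have key : ∀ i, |(Ac.mulVec x) i| ≤ (Δ.mulVec (fun j => |x j|)) i := by
    intro i
    have : (Ac.mulVec x) i = ∑ j, (Ac i j - A i j) * x j := by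
      simp [Matrix.mulVec, dotProduct, sub_mul, Finset.sum_sub_distrib]
      have : ∑ j, A i j * x j = 0 := by
        have := congrFun hAx i
        simpa [Matrix.mulVec, dotProduct] using this
      simp [this]
    rw [this]
    calc |∑ j, (Ac i j - A i j) * x j| ≤ ∑ j, |(Ac i j - A i j) * x j| :=
          Finset.abs_sum_le_sum_abs _ _
      _ ≤ ∑ j, Δ i j * |x j| := by
          apply Finset.sum_le_sum
          intro j _
          rw [abs_mul]
          exact mul_le_mul_of_nonneg_right (by rw [abs_sub_comm]; exact hA i j)
            (abs_nonneg _)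
      _ = (Δ.mulVec (fun j => |x j|)) i := by simp [Matrix.mulVec, dotProduct]
  have h1 : euclNorm (Ac.mulVec x) ≤ euclNorm (Δ.mulVec (fun j => |x j|)) :=
    euclNorm_mono key
  have h2 : euclNorm (Δ.mulVec (fun j => |x j|)) ≤ c * euclNorm x := by
    calc euclNorm (Δ.mulVec (fun j => |x j|)) ≤ c * euclNorm (fun j => |x j|) := hΔle _
      _ = c * euclNorm x := by rw [euclNorm_abs]
  have := hAc x hx
  linarith
end

section
/- Sufficient condition for regularity (norm condition): Let A_c, Δ ∈ ℝ^{n×n} with Δ ≥ 0 entrywise, and let ν be a norm on real n×n matrices that is submultiplicative (ν(MN) ≤ ν(M)ν(N) for all M, N). If the symmetric matrix A_c^T A_c − ν(Δ^T Δ)·I is positive definite, then every real matrix A with |A − A_c| ≤ Δ entrywise is invertible. -/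
/-!
If `A x = 0` with `x ≠ 0`, then `A_c x = (A_c - A) x` is bounded entrywise by `Δ |x|`, so
`‖A_c x‖² ≤ |x|ᵀ ΔᵀΔ |x| ≤ λ_max(ΔᵀΔ) ‖x‖² ≤ ν(ΔᵀΔ) ‖x‖²`, contradicting positive definiteness of
`A_cᵀ A_c - ν(ΔᵀΔ) I`. The last inequality holds because every eigenvalue `μ` of a matrix `M`
satisfies `|μ| ≤ ν(M)`: if `M v = μ v`, then `M (v vᵀ) = μ (v vᵀ)`, and submultiplicativity gives
`|μ| ν(v vᵀ) ≤ ν(M) ν(v vᵀ)` with `ν(v vᵀ) > 0`.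
-/

open Matrix
open scoped MatrixOrder

variable {ι : Type*} [Fintype ι]

theorem abs_dotProduct_abs_self (x : ι → ℝ) : |x| ⬝ᵥ |x| = x ⬝ᵥ x := by
  simp only [dotProduct, Pi.abs_apply, abs_mul_abs_self]

theorem dotProduct_self_le_of_abs_le {u w : ι → ℝ} (h : ∀ i, |u i| ≤ w i) :
    u ⬝ᵥ u ≤ w ⬝ᵥ w :=
  Finset.sum_le_sum fun i _ ↦ by
    simpa only [abs_mul_abs_self] using mul_self_le_mul_self (abs_nonneg _) (h i)

namespace Matrix

theorem dotProduct_transpose_mul_mulVec {R : Type*} [CommSemiring R] (B : Matrix ι ι R)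
    (x : ι → R) : x ⬝ᵥ (Bᵀ * B) *ᵥ x = (B *ᵥ x) ⬝ᵥ (B *ᵥ x) := by
  rw [← mulVec_mulVec, dotProduct_mulVec, vecMul_transpose]

theorem abs_mulVec_le_s4 {B Δ : Matrix ι ι ℝ} (hB : ∀ i j, |B i j| ≤ Δ i j) (x : ι → ℝ) (i : ι) :
    |(B *ᵥ x) i| ≤ (Δ *ᵥ |x|) i :=
  calc |(B *ᵥ x) i| ≤ ∑ j, |B i j * x j| := Finset.abs_sum_le_sum_abs _ _
    _ ≤ ∑ j, Δ i j * |x j| := Finset.sum_le_sum fun j _ ↦ by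
        rw [abs_mul]; exact mul_le_mul_of_nonneg_right (hB i j) (abs_nonneg _)

theorem norm_le_of_mulVec_eq_smul {𝕜 : Type*} [NormedField 𝕜] (ν : Matrix ι ι 𝕜 → ℝ)
    (hν0 : ∀ M, ν M = 0 → M = 0) (hνadd : ∀ M N, ν (M + N) ≤ ν M + ν N)
    (hνsmul : ∀ (a : 𝕜) M, ν (a • M) = ‖a‖ * ν M) (hνmul : ∀ M N, ν (M * N) ≤ ν M * ν N)
    {M : Matrix ι ι 𝕜} {μ : 𝕜} {v : ι → 𝕜} (hv : v ≠ 0) (hMv : M *ᵥ v = μ • v) :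
    ‖μ‖ ≤ ν M := by
  set V := vecMulVec v v
  have hV : 0 < ν V :=
    (apply_nonneg (Seminorm.of ν hνadd hνsmul) V).lt_of_ne' fun h ↦ by
      simpa [V, hv] using hν0 V h
  refine le_of_mul_le_mul_right ?_ hV
  calc ‖μ‖ * ν V = ν (M * V) := by rw [← hνsmul, mul_vecMulVec, hMv, smul_vecMulVec]
    _ ≤ ν M * ν V := hνmul M V

theorem exists_mulVec_eq_smul_of_mem_spectrum {K : Type*} [Field K] [DecidableEq ι]
    {M : Matrix ι ι K} {μ : K} (hμ : μ ∈ spectrum K M) : ∃ v ≠ 0, M *ᵥ v = μ • v := by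
  rw [← spectrum_toLin', ← Module.End.hasEigenvalue_iff_mem_spectrum] at hμ
  obtain ⟨v, hv, hv0⟩ := hμ.exists_hasEigenvector
  exact ⟨v, hv0, by simpa using Module.End.mem_eigenspace_iff.1 hv⟩

theorem IsHermitian.posSemidef_smul_one_sub [DecidableEq ι] (ν : Matrix ι ι ℝ → ℝ)
    (hν0 : ∀ M, ν M = 0 → M = 0) (hνadd : ∀ M N, ν (M + N) ≤ ν M + ν N)
    (hνsmul : ∀ (a : ℝ) M, ν (a • M) = |a| * ν M) (hνmul : ∀ M N, ν (M * N) ≤ ν M * ν N)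
    {M : Matrix ι ι ℝ} (hM : M.IsHermitian) : (ν M • (1 : Matrix ι ι ℝ) - M).PosSemidef := by
  have hle : M ≤ algebraMap ℝ _ (ν M) := le_algebraMap_of_spectrum_le (fun μ hμ ↦ by
    obtain ⟨v, hv, hMv⟩ := exists_mulVec_eq_smul_of_mem_spectrum hμ
    exact (le_abs_self μ).trans (norm_le_of_mulVec_eq_smul ν hν0 hνadd hνsmul hνmul hv hMv)) hM
  rwa [Algebra.algebraMap_eq_smul_one] at hle

theorem IsHermitian.dotProduct_mulVec_le [DecidableEq ι] (ν : Matrix ι ι ℝ → ℝ)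
    (hν0 : ∀ M, ν M = 0 → M = 0) (hνadd : ∀ M N, ν (M + N) ≤ ν M + ν N)
    (hνsmul : ∀ (a : ℝ) M, ν (a • M) = |a| * ν M) (hνmul : ∀ M N, ν (M * N) ≤ ν M * ν N)
    {M : Matrix ι ι ℝ} (hM : M.IsHermitian) (y : ι → ℝ) : y ⬝ᵥ M *ᵥ y ≤ ν M * (y ⬝ᵥ y) := by
  have := (hM.posSemidef_smul_one_sub ν hν0 hνadd hνsmul hνmul).dotProduct_mulVec_nonneg y
  simp only [star_trivial, sub_mulVec, smul_mulVec, one_mulVec, dotProduct_sub,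
    dotProduct_smul, smul_eq_mul] at this
  linarith

end Matrix

theorem regular_of_norm_condition_general {n : ℕ} (Ac Δ : Matrix (Fin n) (Fin n) ℝ)
    (ν : Matrix (Fin n) (Fin n) ℝ → ℝ)
    (hν0 : ∀ M, ν M = 0 ↔ M = 0)
    (hνadd : ∀ M N, ν (M + N) ≤ ν M + ν N)
    (hνsmul : ∀ (a : ℝ) (M), ν (a • M) = |a| * ν M)
    (hνmul : ∀ M N, ν (M * N) ≤ ν M * ν N)
    (hPD : (Ac.transpose * Ac - ν (Δ.transpose * Δ) • (1 : Matrix (Fin n) (Fin n) ℝ)).PosDef) :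
    ∀ A : Matrix (Fin n) (Fin n) ℝ, (∀ i j, |A i j - Ac i j| ≤ Δ i j) → IsUnit A := by
  intro A hA
  rw [isUnit_iff_isUnit_det, isUnit_iff_ne_zero]
  intro hdet
  obtain ⟨x, hx, hAx⟩ := exists_mulVec_eq_zero_iff.2 hdet
  have hAcx : Ac *ᵥ x = (Ac - A) *ᵥ x := by rw [sub_mulVec, hAx, sub_zero]
  have hAcA : ∀ i j, |(Ac - A) i j| ≤ Δ i j := fun i j ↦ by simpa [abs_sub_comm] using hA i j
  have hΔΔ : (Δᵀ * Δ).IsHermitian := isHermitian_iff_isSymm.2 (isSymm_transpose_mul_self Δ)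
  have hbound : (Ac *ᵥ x) ⬝ᵥ (Ac *ᵥ x) ≤ ν (Δᵀ * Δ) * (x ⬝ᵥ x) :=
    calc (Ac *ᵥ x) ⬝ᵥ (Ac *ᵥ x) ≤ (Δ *ᵥ |x|) ⬝ᵥ (Δ *ᵥ |x|) := by
          rw [hAcx]; exact dotProduct_self_le_of_abs_le (abs_mulVec_le_s4 hAcA x)
      _ = |x| ⬝ᵥ (Δᵀ * Δ) *ᵥ |x| := (dotProduct_transpose_mul_mulVec _ _).symm
      _ ≤ ν (Δᵀ * Δ) * (|x| ⬝ᵥ |x|) :=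
          hΔΔ.dotProduct_mulVec_le ν (fun M ↦ (hν0 M).1) hνadd hνsmul hνmul |x|
      _ = ν (Δᵀ * Δ) * (x ⬝ᵥ x) := by rw [abs_dotProduct_abs_self]
  have hpos := hPD.dotProduct_mulVec_pos hx
  simp only [star_trivial, sub_mulVec, smul_mulVec, one_mulVec, dotProduct_sub,
    dotProduct_smul, smul_eq_mul, dotProduct_transpose_mul_mulVec] at hpos
  linarith

/-- Sufficient condition for regularity: if `ν` is a submultiplicative matrix
norm and `A_cᵀ A_c - ν(Δᵀ Δ) • I` is positive definite, then every matrix in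
`[A_c - Δ, A_c + Δ]` is invertible. -/
theorem regular_of_norm_condition {n : ℕ} (Ac Δ : Matrix (Fin n) (Fin n) ℝ)
    (hΔ : ∀ i j, 0 ≤ Δ i j)
    (ν : Matrix (Fin n) (Fin n) ℝ → ℝ)
    (hν0 : ∀ M, ν M = 0 ↔ M = 0)
    (hνadd : ∀ M N, ν (M + N) ≤ ν M + ν N)
    (hνsmul : ∀ (a : ℝ) (M), ν (a • M) = |a| * ν M)
    (hνmul : ∀ M N, ν (M * N) ≤ ν M * ν N)
    (hPD : (Ac.transpose * Ac - ν (Δ.transpose * Δ) • (1 : Matrix (Fin n) (Fin n) ℝ)).PosDef) :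
    ∀ A : Matrix (Fin n) (Fin n) ℝ, (∀ i j, |A i j - Ac i j| ≤ Δ i j) → IsUnit A :=
  regular_of_norm_condition_general Ac Δ ν hν0 hνadd hνsmul hνmul hPD
end

section
/- Sufficient condition for singularity (diagonal condition): Let A_c, Δ ∈ ℝ^{n×n} with Δ ≥ 0 entrywise and A_c invertible. If max_j (|A_c^{-1}| Δ)_{jj} ≥ 1, i.e., some diagonal entry of the matrix |A_c^{-1}| Δ (where |A_c^{-1}| is the entrywise absolute value of A_c^{-1}) is at least 1, then there exists a non-invertible real matrix A with |A − A_c| ≤ Δ entrywise. -/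
/-!
Let `s = (|A_c⁻¹| Δ)_jj ≥ 1`. Choosing the signs of `c_k = ±Δ_kj` to agree with those of
`(A_c⁻¹)_jk` makes `(A_c⁻¹ c)_j = s`. The rank-one perturbation `c e_jᵀ / s` then has entries
bounded by `Δ`, and `A_c - c e_jᵀ / s` maps the nonzero vector `A_c⁻¹ c` to `c - c = 0`.
-/

open Matrix

theorem Matrix.not_isUnit_sub_vecMulVec_mulVec {m R : Type*} [Fintype m] [DecidableEq m]
    [CommRing R] [Nontrivial R] (M : Matrix m m R) {v w : m → R} (hwv : w ⬝ᵥ v = 1) :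
    ¬IsUnit (M - vecMulVec (M *ᵥ v) w) := by
  intro hunit
  have hv : v ≠ 0 := by
    rintro rfl
    simp at hwv
  have hker : (M - vecMulVec (M *ᵥ v) w) *ᵥ v = 0 := by
    rw [sub_mulVec, vecMulVec_mulVec, hwv, MulOpposite.op_one, one_smul, sub_self]
  exact hv (mulVec_injective_of_isUnit hunit (hker.trans (mulVec_zero _).symm))

theorem exists_abs_eq_and_dotProduct_eq_sum_abs_mul {m R : Type*} [Fintype m] [Ring R]
    [LinearOrder R] [IsOrderedRing R] (b d : m → R) (hd : 0 ≤ d) :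
    ∃ c : m → R, (∀ k, |c k| = d k) ∧ b ⬝ᵥ c = ∑ k, |b k| * d k := by
  refine ⟨fun k => if 0 ≤ b k then d k else -d k, fun k => ?_,
    Finset.sum_congr rfl fun k _ => ?_⟩
  · beta_reduce
    split_ifs <;> simp [abs_of_nonneg (hd k)]
  · beta_reduce
    split_ifs with hk
    · rw [abs_of_nonneg hk]
    · rw [abs_of_neg (not_le.mp hk), mul_neg, neg_mul]

/-- Sufficient condition for singularity: if `A_c` is invertible and some
diagonal entry of `|A_c⁻¹| Δ` is at least `1`, then the interval matrix
`[A_c - Δ, A_c + Δ]` contains a non-invertible matrix. -/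
theorem singular_of_diagonal_condition {n : ℕ} (Ac Δ : Matrix (Fin n) (Fin n) ℝ)
    (hΔ : ∀ i j, 0 ≤ Δ i j) (hAc : IsUnit Ac)
    (h : ∃ j, 1 ≤ (((Ac⁻¹).map (fun r => |r|)) * Δ) j j) :
    ∃ A : Matrix (Fin n) (Fin n) ℝ, (∀ i j, |A i j - Ac i j| ≤ Δ i j) ∧ ¬ IsUnit A := by
  obtain ⟨j, hj⟩ := h
  set s := ((Ac⁻¹).map (fun r => |r|) * Δ) j j
  have hs : 0 < s := one_pos.trans_le hj
  have hs_sum : ∑ k, |Ac⁻¹ j k| * Δ k j = s := by simp only [s, mul_apply, map_apply]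
  obtain ⟨c, hc_abs, hc_dot⟩ := exists_abs_eq_and_dotProduct_eq_sum_abs_mul
    (Ac⁻¹ j) (fun k => Δ k j) (fun k => hΔ k j)
  have hMv : Ac *ᵥ (Ac⁻¹ *ᵥ c) = c := by
    rw [mulVec_mulVec, mul_nonsing_inv _ ((isUnit_iff_isUnit_det _).mp hAc), one_mulVec]
  have hwv : Pi.single j s⁻¹ ⬝ᵥ (Ac⁻¹ *ᵥ c) = 1 := by
    rw [single_dotProduct, mulVec, hc_dot, hs_sum, inv_mul_cancel₀ hs.ne']
  refine ⟨Ac - vecMulVec c (Pi.single j s⁻¹), fun i l => ?_, ?_⟩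
  · rw [Matrix.sub_apply, sub_sub_cancel_left, abs_neg, vecMulVec_apply, abs_mul]
    rcases eq_or_ne l j with rfl | hl
    · rw [hc_abs, Pi.single_eq_same, abs_inv, abs_of_pos hs]
      exact mul_le_of_le_one_right (hΔ i l) (inv_le_one_of_one_le₀ hj)
    · simp [hl, hΔ i l]
  · simpa only [hMv] using not_isUnit_sub_vecMulVec_mulVec Ac hwv
end

section
/- Singular witness for unit-radius interval matrices: Let A ∈ ℝ^{n×n} be symmetric, positive definite, and entrywise nonnegative. If the interval matrix [A − E, A + E] (where E is the all-ones n×n matrix) is singular, i.e., contains a non-invertible matrix, then there exists a sign vector z ∈ {−1, 1}^n such that the matrix A − (z zᵀ)/(zᵀ A^{-1} z) is non-invertible and lies in [A − E, A + E], i.e., every entry of (z zᵀ)/(zᵀ A^{-1} z) has absolute value at most 1. -/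
/-!
Let `B` be a singular matrix of the interval, `B x = 0` with `x ≠ 0`, and let `z` be the sign
vector of `x`. Then
`xᵀAx = xᵀ(A - B)x ≤ (∑ |xᵢ|)² = (zᵀx)² ≤ (zᵀA⁻¹z)(xᵀAx)`,
the last step being Cauchy–Schwarz for the inner product defined by `A⁻¹`, applied to `z` and
`Ax`. Hence `zᵀA⁻¹z ≥ 1`, so the entries `±1/(zᵀA⁻¹z)` of the rank-one correction are at most
`1` in absolute value, and the corrected matrix is singular because it annihilates `A⁻¹z`.
-/

open Matrix

section

variable {ι : Type*}

noncomputable def signVec (x : ι → ℝ) : ι → ℝ := fun i ↦ if 0 ≤ x i then 1 else -1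

theorem signVec_eq_one_or_neg_one (x : ι → ℝ) (i : ι) : signVec x i = 1 ∨ signVec x i = -1 := by
  unfold signVec; split_ifs <;> simp

theorem abs_signVec (x : ι → ℝ) (i : ι) : |signVec x i| = 1 := by
  rcases signVec_eq_one_or_neg_one x i with h | h <;> simp [h]

variable [Fintype ι]

theorem signVec_dotProduct (x : ι → ℝ) : signVec x ⬝ᵥ x = ∑ i, |x i| := by
  refine Finset.sum_congr rfl fun i _ ↦ ?_
  unfold signVec
  split_ifs with h
  · rw [one_mul, abs_of_nonneg h]
  · rw [neg_one_mul, abs_of_neg (not_le.1 h)]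

theorem Matrix.PosSemidef.sq_dotProduct_mulVec_le {M : Matrix ι ι ℝ} (hM : M.PosSemidef)
    (x y : ι → ℝ) : (x ⬝ᵥ M *ᵥ y) ^ 2 ≤ (x ⬝ᵥ M *ᵥ x) * (y ⬝ᵥ M *ᵥ y) := by
  classical
  have hsymm : LinearMap.IsSymm M.toBilin' :=
    LinearMap.BilinForm.isSymm_iff.1 (Matrix.isSymm_toBilin'_iff_isSymm.2 hM.isHermitian)
  simpa only [Matrix.toBilin'_apply'] using M.toBilin'.apply_sq_le_of_symm
    (fun v ↦ by
      simpa only [Matrix.toBilin'_apply', star_trivial] using hM.dotProduct_mulVec_nonneg v)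
    hsymm x y

theorem dotProduct_mulVec_le_sq_sum_abs {M : Matrix ι ι ℝ} (hM : ∀ i j, |M i j| ≤ 1)
    (x : ι → ℝ) : x ⬝ᵥ M *ᵥ x ≤ (∑ i, |x i|) ^ 2 := by
  rw [sq, Finset.sum_mul_sum]
  refine Finset.sum_le_sum fun i _ ↦ ?_
  rw [mulVec, dotProduct, Finset.mul_sum]
  refine Finset.sum_le_sum fun j _ ↦ ?_
  calc x i * (M i j * x j) ≤ |x i| * (|M i j| * |x j|) := by
        rw [← abs_mul, ← abs_mul]; exact le_abs_self _
    _ ≤ |x i| * (1 * |x j|) := by gcongr; exact hM i j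
    _ = |x i| * |x j| := by rw [one_mul]

variable [DecidableEq ι]

theorem Matrix.PosDef.sq_dotProduct_le {A : Matrix ι ι ℝ} (hA : A.PosDef) (z x : ι → ℝ) :
    (z ⬝ᵥ x) ^ 2 ≤ (z ⬝ᵥ A⁻¹ *ᵥ z) * (x ⬝ᵥ A *ᵥ x) := by
  have := hA.inv.posSemidef.sq_dotProduct_mulVec_le z (A *ᵥ x)
  rwa [mulVec_mulVec, nonsing_inv_mul _ (A.isUnit_iff_isUnit_det.1 hA.isUnit), one_mulVec,
    dotProduct_comm (A *ᵥ x)] at this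

theorem Matrix.not_isUnit_sub_inv_smul_vecMulVec {K : Type*} [Field K] (A : Matrix ι ι K)
    {z : ι → K} (hz : z ⬝ᵥ A⁻¹ *ᵥ z ≠ 0) :
    ¬ IsUnit (A - (z ⬝ᵥ A⁻¹ *ᵥ z)⁻¹ • vecMulVec z z) := by
  have hA : IsUnit A.det := by
    by_contra hA
    simp [nonsing_inv_apply_not_isUnit A hA] at hz
  have hw : A⁻¹ *ᵥ z ≠ 0 := fun h ↦ hz (by rw [h, dotProduct_zero])
  have hker : (A - (z ⬝ᵥ A⁻¹ *ᵥ z)⁻¹ • vecMulVec z z) *ᵥ (A⁻¹ *ᵥ z) = 0 := by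
    rw [sub_mulVec, mulVec_mulVec, mul_nonsing_inv A hA, one_mulVec, smul_mulVec,
      vecMulVec_mulVec, op_smul_eq_smul, smul_smul, inv_mul_cancel₀ hz, one_smul, sub_self]
  exact fun hU ↦ hw (mulVec_injective_iff_isUnit.2 hU (hker.trans (mulVec_zero _).symm))

theorem one_le_signVec_dotProduct_inv_mulVec {A B : Matrix ι ι ℝ} (hA : A.PosDef)
    (hB : ∀ i j, |B i j - A i j| ≤ 1) {x : ι → ℝ} (hx : x ≠ 0) (hBx : B *ᵥ x = 0) :
    1 ≤ signVec x ⬝ᵥ A⁻¹ *ᵥ signVec x := by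
  have hpos : 0 < x ⬝ᵥ A *ᵥ x := by simpa using hA.dotProduct_mulVec_pos hx
  have hAB : ∀ i j, |(A - B) i j| ≤ 1 := fun i j ↦ by
    rw [Matrix.sub_apply, abs_sub_comm]; exact hB i j
  have hle : x ⬝ᵥ A *ᵥ x ≤ (signVec x ⬝ᵥ A⁻¹ *ᵥ signVec x) * (x ⬝ᵥ A *ᵥ x) :=
    calc x ⬝ᵥ A *ᵥ x = x ⬝ᵥ (A - B) *ᵥ x := by rw [sub_mulVec, hBx, sub_zero]
      _ ≤ (signVec x ⬝ᵥ x) ^ 2 := signVec_dotProduct x ▸ dotProduct_mulVec_le_sq_sum_abs hAB x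
      _ ≤ _ := hA.sq_dotProduct_le _ _
  exact le_of_mul_le_mul_right (by rwa [one_mul]) hpos

end

theorem singular_witness_unit_radius_general {n : ℕ} (A : Matrix (Fin n) (Fin n) ℝ)
    (hPD : A.PosDef)
    (hSing : ∃ B : Matrix (Fin n) (Fin n) ℝ,
      (∀ i j, |B i j - A i j| ≤ 1) ∧ ¬ IsUnit B) :
    ∃ z : Fin n → ℝ, (∀ i, z i = 1 ∨ z i = -1) ∧
      ¬ IsUnit (A - (z ⬝ᵥ (A⁻¹).mulVec z)⁻¹ • Matrix.vecMulVec z z) ∧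
      (∀ i j, |((z ⬝ᵥ (A⁻¹).mulVec z)⁻¹ • Matrix.vecMulVec z z) i j| ≤ 1) := by
  obtain ⟨B, hB, hBsing⟩ := hSing
  obtain ⟨x, hx, hBx⟩ : ∃ x ≠ 0, B *ᵥ x = 0 := exists_mulVec_eq_zero_iff.2 <| by
    rwa [isUnit_iff_isUnit_det, isUnit_iff_ne_zero, not_not] at hBsing
  have hlam := one_le_signVec_dotProduct_inv_mulVec hPD hB hx hBx
  have hpos := zero_lt_one.trans_le hlam
  refine ⟨signVec x, signVec_eq_one_or_neg_one x,
    A.not_isUnit_sub_inv_smul_vecMulVec hpos.ne', fun i j ↦ ?_⟩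
  rw [Matrix.smul_apply, vecMulVec_apply, smul_eq_mul, abs_mul, abs_mul, abs_signVec,
    abs_signVec, mul_one, mul_one, abs_inv, abs_of_pos hpos]
  exact inv_le_one_of_one_le₀ hlam

/-- Singular witness for unit-radius interval matrices: if `A` is symmetric
positive definite with nonnegative entries and the interval matrix
`[A - E, A + E]` contains a non-invertible matrix, then there is a sign vector
`z ∈ {±1}ⁿ` such that `A - (z zᵀ)/(zᵀ A⁻¹ z)` is non-invertible and lies in
`[A - E, A + E]`. -/
theorem singular_witness_unit_radius {n : ℕ} (A : Matrix (Fin n) (Fin n) ℝ)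
    (hSym : A.IsHermitian) (hPD : A.PosDef) (hNonneg : ∀ i j, 0 ≤ A i j)
    (hSing : ∃ B : Matrix (Fin n) (Fin n) ℝ,
      (∀ i j, |B i j - A i j| ≤ 1) ∧ ¬ IsUnit B) :
    ∃ z : Fin n → ℝ, (∀ i, z i = 1 ∨ z i = -1) ∧
      ¬ IsUnit (A - (z ⬝ᵥ (A⁻¹).mulVec z)⁻¹ • Matrix.vecMulVec z z) ∧
      (∀ i j, |((z ⬝ᵥ (A⁻¹).mulVec z)⁻¹ • Matrix.vecMulVec z z) i j| ≤ 1) :=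
  singular_witness_unit_radius_general A hPD hSing
end

section
/- Sufficient condition for full column rank (pseudoinverse condition): Let A_c, Δ ∈ ℝ^{m×n} with Δ ≥ 0 entrywise. Suppose A_c has full column rank n (so that A_cᵀA_c is invertible and the Moore–Penrose inverse is A_c^† = (A_cᵀA_c)^{-1}A_cᵀ). If the spectral radius of the nonnegative matrix |A_c^†| Δ (entrywise absolute value of A_c^†, times Δ) is strictly less than 1, then every real matrix A with |A − A_c| ≤ Δ entrywise has full column rank n. -/
/-!
If `A x = 0`, then `x = P (A_c - A) x` for the left inverse `P = (A_cᵀ A_c)⁻¹ A_cᵀ` of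
`A_c`, so the vector `|x|` satisfies `|x| ≤ B |x|` with the nonnegative matrix `B = |P| Δ`.
Iterating gives `|x| ≤ Bᵏ |x|`, and `Bᵏ → 0` by Gelfand's formula since the spectral radius
of `B` is below `1`. Hence `x = 0`.
-/

open Filter Topology Matrix
open scoped NNReal

theorem spectrum.tendsto_pow_atTop_nhds_zero {A : Type*} [NormedRing A] [NormedAlgebra ℂ A]
    [CompleteSpace A] {a : A} (ha : ∀ μ ∈ spectrum ℂ a, ‖μ‖ < 1) :
    Tendsto (a ^ ·) atTop (𝓝 0) := by
  rcases subsingleton_or_nontrivial A with hA | hA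
  · simp [Subsingleton.elim _ (0 : A)]
  have hρ : spectralRadius ℂ a < (1 : ℝ≥0) :=
    spectrum.spectralRadius_lt_of_forall_lt a fun μ hμ => ha μ hμ
  obtain ⟨r, hρr, hr1⟩ := ENNReal.lt_iff_exists_nnreal_btwn.mp hρ
  have hbound : ∀ᶠ k : ℕ in atTop, ‖a ^ k‖ ≤ (r : ℝ) ^ k := by
    filter_upwards [(pow_nnnorm_pow_one_div_tendsto_nhds_spectralRadius a).eventually_lt_const hρr,
      eventually_gt_atTop 0] with k hk hk0
    rw [one_div, ENNReal.rpow_inv_lt_iff (by positivity), ENNReal.rpow_natCast] at hk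
    exact_mod_cast hk.le
  exact squeeze_zero_norm' hbound
    (tendsto_pow_atTop_nhds_zero_of_lt_one r.coe_nonneg (by exact_mod_cast hr1))

namespace Matrix

variable {ι κ R : Type*}

theorem tendsto_pow_atTop_nhds_zero_of_spectrum_map_ofReal [Fintype ι] [DecidableEq ι]
    {B : Matrix ι ι ℝ} (hB : ∀ μ ∈ spectrum ℂ (B.map Complex.ofReal), ‖μ‖ < 1) :
    Tendsto (B ^ ·) atTop (𝓝 0) := by
  let := Matrix.linftyOpNormedRing (n := ι) (α := ℂ)
  let := Matrix.linftyOpNormedAlgebra (n := ι) (α := ℂ) (R := ℂ)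
  have hC := spectrum.tendsto_pow_atTop_nhds_zero hB
  have hre : Continuous fun M : Matrix ι ι ℂ => M.map Complex.re :=
    continuous_id.matrix_map Complex.continuous_re
  have hpow : ∀ k : ℕ, ((B.map Complex.ofReal) ^ k).map Complex.re = B ^ k := fun k => by
    change (Complex.ofRealHom.mapMatrix B ^ k).map Complex.re = _
    rw [← map_pow]
    ext i j
    simp
  simpa [Function.comp_def, hpow] using (hre.tendsto 0).comp hC

section OrderedSemiring

variable [Semiring R] [PartialOrder R] [IsOrderedRing R] [Fintype ι]

theorem mulVec_le_mulVec_of_nonneg {M : Matrix κ ι R} (hM : ∀ i j, 0 ≤ M i j) {u v : ι → R}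
    (huv : u ≤ v) : M *ᵥ u ≤ M *ᵥ v :=
  fun i => dotProduct_le_dotProduct_of_nonneg_left huv (hM i)

theorem le_pow_mulVec_of_le_mulVec [DecidableEq ι] {M : Matrix ι ι R} (hM : ∀ i j, 0 ≤ M i j)
    {y : ι → R} (hy : y ≤ M *ᵥ y) : ∀ k : ℕ, y ≤ (M ^ k) *ᵥ y
  | 0 => by rw [pow_zero, one_mulVec]
  | k + 1 => by
    rw [pow_succ', ← mulVec_mulVec]
    exact hy.trans (mulVec_le_mulVec_of_nonneg hM (le_pow_mulVec_of_le_mulVec hM hy k))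

theorem nonpos_of_le_mulVec [DecidableEq ι] [TopologicalSpace R] [IsTopologicalSemiring R]
    [OrderClosedTopology R] {M : Matrix ι ι R} (hM : ∀ i j, 0 ≤ M i j)
    (hlim : Tendsto (M ^ ·) atTop (𝓝 0)) {y : ι → R} (hy : y ≤ M *ᵥ y) : y ≤ 0 := by
  have hMy : Tendsto (fun k : ℕ => (M ^ k) *ᵥ y) atTop (𝓝 0) := by
    simpa [Function.comp_def] using
      ((continuous_id.matrix_mulVec continuous_const).tendsto 0).comp hlim
  exact ge_of_tendsto' hMy (le_pow_mulVec_of_le_mulVec hM hy)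

end OrderedSemiring

theorem abs_mulVec_le_mulVec [CommRing R] [LinearOrder R] [IsStrictOrderedRing R] [Fintype κ]
    {M N : Matrix ι κ R} (hMN : ∀ i j, |M i j| ≤ N i j) (x : κ → R) :
    |M *ᵥ x| ≤ N *ᵥ |x| := fun i =>
  calc |(M *ᵥ x) i| ≤ ∑ j, |M i j * x j| := Finset.abs_sum_le_sum_abs _ _
    _ ≤ ∑ j, N i j * |x j| := Finset.sum_le_sum fun j _ => by
      rw [abs_mul]; exact mul_le_mul_of_nonneg_right (hMN i j) (abs_nonneg _)
    _ = (N *ᵥ |x|) i := rfl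

theorem isUnit_transpose_mul_self [Fintype ι] [Fintype κ] [DecidableEq κ] [Field R]
    [LinearOrder R] [IsStrictOrderedRing R] {A : Matrix ι κ R}
    (hA : Function.Injective A.mulVec) : IsUnit (Aᵀ * A) := by
  rw [← mulVec_injective_iff_isUnit]
  exact LinearMap.ker_eq_bot.mp
    ((ker_mulVecLin_transpose_mul_self A).trans (LinearMap.ker_eq_bot.mpr hA))

end Matrix

theorem fullColumnRank_of_spectralRadius_lt_one_general {m n : ℕ}
    (Ac Δ : Matrix (Fin m) (Fin n) ℝ)
    (hAc : ∀ x : Fin n → ℝ, Ac.mulVec x = 0 → x = 0)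
    (hρ : ∀ μ ∈ spectrum ℂ
      (((((Ac.transpose * Ac)⁻¹ * Ac.transpose).map (fun r => |r|)) * Δ).map
        (Complex.ofReal)), ‖μ‖ < 1) :
    ∀ A : Matrix (Fin m) (Fin n) ℝ, (∀ i j, |A i j - Ac i j| ≤ Δ i j) →
      ∀ x : Fin n → ℝ, A.mulVec x = 0 → x = 0 := by
  intro A hA x hx
  set P := (Acᵀ * Ac)⁻¹ * Acᵀ
  have hPAc : P * Ac = 1 := by
    have hU := isUnit_transpose_mul_self ((injective_iff_map_eq_zero Ac.mulVecLin).mpr hAc)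
    rw [Matrix.mul_assoc, nonsing_inv_mul _ ((isUnit_iff_isUnit_det _).mp hU)]
  have hxP : x = P *ᵥ ((Ac - A) *ᵥ x) := by
    rw [sub_mulVec, hx, sub_zero, mulVec_mulVec, hPAc, one_mulVec]
  have hΔ : ∀ i j, 0 ≤ Δ i j := fun i j => (abs_nonneg _).trans (hA i j)
  have hB : ∀ i j, 0 ≤ (P.map abs * Δ) i j := fun i j =>
    dotProduct_nonneg_of_nonneg (fun k => abs_nonneg (P i k)) (fun k => hΔ k j)
  have hx_le : |x| ≤ (P.map abs * Δ) *ᵥ |x| :=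
    calc |x| = |P *ᵥ ((Ac - A) *ᵥ x)| := congrArg _ hxP
      _ ≤ P.map abs *ᵥ |(Ac - A) *ᵥ x| := abs_mulVec_le_mulVec (fun _ _ => le_rfl) _
      _ ≤ P.map abs *ᵥ (Δ *ᵥ |x|) := mulVec_le_mulVec_of_nonneg (fun _ _ => abs_nonneg _)
          (abs_mulVec_le_mulVec (fun i j => by rw [Matrix.sub_apply, abs_sub_comm]; exact hA i j) _)
      _ = (P.map abs * Δ) *ᵥ |x| := mulVec_mulVec _ _ _
  have hx_nonpos :=
    nonpos_of_le_mulVec hB (tendsto_pow_atTop_nhds_zero_of_spectrum_map_ofReal hρ) hx_le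
  exact funext fun i => abs_nonpos_iff.mp (hx_nonpos i)

/-- Sufficient condition for full column rank: if `A_c` has full column rank
(so `A_c† = (A_cᵀ A_c)⁻¹ A_cᵀ`) and the spectral radius of `|A_c†| Δ` is less
than `1` (every complex eigenvalue has modulus `< 1`), then every matrix in
`[A_c - Δ, A_c + Δ]` has full column rank. -/
theorem fullColumnRank_of_spectralRadius_lt_one {m n : ℕ}
    (Ac Δ : Matrix (Fin m) (Fin n) ℝ)
    (hΔ : ∀ i j, 0 ≤ Δ i j)
    (hAc : ∀ x : Fin n → ℝ, Ac.mulVec x = 0 → x = 0)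
    (hρ : ∀ μ ∈ spectrum ℂ
      (((((Ac.transpose * Ac)⁻¹ * Ac.transpose).map (fun r => |r|)) * Δ).map
        (Complex.ofReal)), ‖μ‖ < 1) :
    ∀ A : Matrix (Fin m) (Fin n) ℝ, (∀ i j, |A i j - Ac i j| ≤ Δ i j) →
      ∀ x : Fin n → ℝ, A.mulVec x = 0 → x = 0 :=
  fullColumnRank_of_spectralRadius_lt_one_general Ac Δ hAc hρ
end

section
/- Sharaya's example: Consider the 3×2 interval matrix A whose entries are the intervals A₁₁ = [1,1], A₁₂ = [0,1], A₂₁ = [−1,−1], A₂₂ = [0,1], A₃₁ = [−1,1], A₃₂ = [1,1]. Then (i) every real 3×2 matrix A whose entries lie in the respective intervals has full column rank 2, and (ii) for each of the three 2×2 interval submatrices (obtained by deleting one row), there exists a real 2×2 matrix with entries in the respective intervals that is not invertible; hence A has full column rank but contains no regular square interval submatrix of size 2. -/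
/-!
Full column rank: in `A *ᵥ x = 0` the first two rows read `x₀ + a x₁ = 0` and `-x₀ + b x₁ = 0` with
`a, b ≥ 0`, so `(a + b) x₁ = 0`. Either `x₁ = 0`, and then `x₀ = 0`; or `a = b = 0`, and then
`x₀ = 0` and the third row `c x₀ + x₁ = 0` gives `x₁ = 0`. No square submatrix is regular: deleting
a row leaves an interval matrix containing a matrix with equal rows, or with a zero column.
-/

theorem Matrix.not_isUnit_of_mul_eq_mul {R : Type*} [CommRing R] [Nontrivial R] {a b c d : R}
    (h : a * d = b * c) : ¬ IsUnit !![a, b; c, d] := by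
  rw [Matrix.isUnit_iff_isUnit_det, Matrix.det_fin_two_of, h, sub_self]
  exact not_isUnit_zero

theorem Matrix.eq_zero_of_mulVec_eq_zero_fin_three_two {K : Type*} [Field K] [LinearOrder K]
    [IsStrictOrderedRing K] {A : Matrix (Fin 3) (Fin 2) K} (h00 : A 0 0 = 1) (h10 : A 1 0 = -1)
    (h21 : A 2 1 = 1) (h01 : 0 ≤ A 0 1) (h11 : 0 ≤ A 1 1) {x : Fin 2 → K} (hx : A.mulVec x = 0) :
    x = 0 := by
  have row (i : Fin 3) : A i 0 * x 0 + A i 1 * x 1 = 0 := by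
    simpa [Matrix.mulVec, dotProduct, Fin.sum_univ_two] using congrFun hx i
  have e0 : x 0 + A 0 1 * x 1 = 0 := by simpa [h00] using row 0
  have e1 : -x 0 + A 1 1 * x 1 = 0 := by simpa [h10] using row 1
  have e2 : A 2 0 * x 0 + x 1 = 0 := by simpa [h21] using row 2
  have hsum : (A 0 1 + A 1 1) * x 1 = 0 := by linear_combination e0 + e1
  have hx1 : x 1 = 0 := by
    rcases mul_eq_zero.mp hsum with hab | hx1
    · have ha : A 0 1 = 0 := by linarith
      have hx0 : x 0 = 0 := by simpa [ha] using e0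
      simpa [hx0] using e2
    · exact hx1
  have hx0 : x 0 = 0 := by simpa [hx1] using e0
  ext i
  fin_cases i <;> simp [hx0, hx1]

/-- Sharaya's example: the 3×2 interval matrix with entry intervals
`[1,1], [0,1]; [-1,-1], [0,1]; [-1,1], [1,1]` has full column rank, yet each of
its three 2×2 interval submatrices (obtained by deleting one row) contains a
non-invertible matrix. -/
theorem sharaya_example :
    let L : Matrix (Fin 3) (Fin 2) ℝ := !![1, 0; -1, 0; -1, 1]
    let U : Matrix (Fin 3) (Fin 2) ℝ := !![1, 1; -1, 1; 1, 1]
    (∀ A : Matrix (Fin 3) (Fin 2) ℝ,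
        (∀ i j, L i j ≤ A i j ∧ A i j ≤ U i j) →
        ∀ x : Fin 2 → ℝ, A.mulVec x = 0 → x = 0) ∧
    (∀ r : Fin 3, ∃ B : Matrix (Fin 2) (Fin 2) ℝ,
        (∀ i j, L (r.succAbove i) j ≤ B i j ∧ B i j ≤ U (r.succAbove i) j) ∧
        ¬ IsUnit B) := by
  intro L U
  refine ⟨fun A hA x hx => ?_, fun r => ?_⟩
  · have h00 := hA 0 0
    have h10 := hA 1 0
    have h21 := hA 2 1
    have h01 := hA 0 1
    have h11 := hA 1 1
    simp [L, U, ← le_antisymm_iff] at h00 h10 h21 h01 h11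
    exact Matrix.eq_zero_of_mulVec_eq_zero_fin_three_two h00.symm h10.symm h21.symm h01.1 h11.1 hx
  · fin_cases r
    · refine ⟨!![-1, 1; -1, 1], fun i j => ?_, Matrix.not_isUnit_of_mul_eq_mul (by ring)⟩
      fin_cases i <;> fin_cases j <;> simp [L, U, Fin.succAbove]
    · refine ⟨!![1, 1; 1, 1], fun i j => ?_, Matrix.not_isUnit_of_mul_eq_mul (by ring)⟩
      fin_cases i <;> fin_cases j <;> simp [L, U, Fin.succAbove]
    · refine ⟨!![1, 0; -1, 0], fun i j => ?_, Matrix.not_isUnit_of_mul_eq_mul (by ring)⟩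
      fin_cases i <;> fin_cases j <;> simp [L, U, Fin.succAbove, Fin.lt_def]
end

section
/- Explicit inverse of an interval matrix with unit midpoint: Let Δ ∈ ℝ^{n×n} with Δ ≥ 0 entrywise, and suppose the interval matrix [I − Δ, I + Δ] is regular, i.e., every real matrix A with |A − I| ≤ Δ entrywise is invertible. Let M = (I − Δ)^{-1}, with diagonal entries m_{jj}, and let D_k be the diagonal matrix with entries k_j = 2 m_{jj}² / (2 m_{jj} − 1) for j = 1,…,n. Then for every pair of indices (i,j): min over all A with |A − I| ≤ Δ of (A^{-1})_{ij} equals (−M + D_k)_{ij}, and max over all A with |A − I| ≤ Δ of (A^{-1})_{ij} equals M_{ij}. -/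
/-!
By the Oettli–Prager theorem, the `j`-th columns `x` of the inverses of the matrices in
`[I - Δ, I + Δ]` are exactly the solutions of `|x - e_j| ≤ Δ |x|`. Regularity along the segment
`I - tΔ`, `0 ≤ t ≤ 1`, forces `M = (I - Δ)⁻¹ ≥ 0`: the set of `t` with `(I - tΔ)⁻¹ ≥ 0` is closed,
and a Neumann series extends it to the right of each of its points. For a solution `x`, the
inequality `(I - Δ) |x| ≤ |x| - |x - e_j|` multiplied by `M ≥ 0` gives `|x| ≤ M e_j` and
`x_j ≥ m_jj / (2 m_jj - 1)`; both bounds are attained by sign changes and rescalings of `M e_j`.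
-/

open Matrix Filter Topology Set

namespace Matrix

section OettliPrager

variable {m n : Type*} [Fintype n] {Ac Δ : Matrix m n ℝ} {b : m → ℝ} {x : n → ℝ}

theorem abs_mulVec_sub_le_of_mulVec_eq {A : Matrix m n ℝ} (hA : ∀ i j, |A i j - Ac i j| ≤ Δ i j)
    (hx : A *ᵥ x = b) : |Ac *ᵥ x - b| ≤ Δ *ᵥ |x| := by
  subst hx
  intro i
  rw [Pi.abs_apply, ← sub_mulVec]
  calc |((Ac - A) *ᵥ x) i| ≤ ∑ j, |(Ac - A) i j * x j| := Finset.abs_sum_le_sum_abs _ _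
    _ ≤ (Δ *ᵥ |x|) i := Finset.sum_le_sum fun j _ => by
        rw [abs_mul, sub_apply, abs_sub_comm]
        exact mul_le_mul_of_nonneg_right (hA i j) (abs_nonneg _)

theorem exists_mulVec_eq_of_abs_sub_le (hΔ : ∀ i j, 0 ≤ Δ i j)
    (hx : |Ac *ᵥ x - b| ≤ Δ *ᵥ |x|) :
    ∃ A : Matrix m n ℝ, (∀ i j, |A i j - Ac i j| ≤ Δ i j) ∧ A *ᵥ x = b := by
  set r := Ac *ᵥ x - b
  set d := Δ *ᵥ |x|
  have hd : ∀ i, 0 ≤ d i := fun i =>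
    Finset.sum_nonneg fun j _ => mul_nonneg (hΔ i j) (abs_nonneg _)
  have hrd : ∀ i, r i / d i * d i = r i := fun i => by
    rcases (hd i).eq_or_lt with h | h
    · have := hx i
      rw [Pi.abs_apply, ← h, abs_nonpos_iff] at this
      simp [this]
    · exact div_mul_cancel₀ _ h.ne'
  -- `A = Ac - diag (r / d) * Δ * diag (sign x)`; where `d i = 0` also `r i = 0`, so the junk
  -- value `r i / 0 = 0` does no harm.
  refine ⟨Ac - of fun i j => r i / d i * Δ i j * SignType.sign (x j), fun i j => ?_, ?_⟩
  · have hr : |r i| / d i ≤ 1 := div_le_one_of_le₀ (hx i) (hd i)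
    have hs : |(SignType.sign (x j) : ℝ)| ≤ 1 := by
      rcases lt_trichotomy (x j) 0 with h | h | h <;> simp [h]
    rw [sub_apply, of_apply, sub_sub_cancel_left, abs_neg, abs_mul, abs_mul, abs_div,
      abs_of_nonneg (hd i), abs_of_nonneg (hΔ i j)]
    have := hΔ i j
    calc |r i| / d i * Δ i j * |(SignType.sign (x j) : ℝ)| ≤ 1 * Δ i j * 1 := by gcongr
      _ = Δ i j := by ring
  · ext i
    have hcorr : ((of fun i j => r i / d i * Δ i j * SignType.sign (x j)) *ᵥ x) i = r i := by
      rw [← hrd i]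
      simp only [d, mulVec, dotProduct, of_apply, Finset.mul_sum, Pi.abs_apply, ← sign_mul_self]
      exact Finset.sum_congr rfl fun j _ => by ring
    rw [sub_mulVec, Pi.sub_apply, hcorr]
    simp [r]

end OettliPrager

theorem abs_one_sub_smul_sub_one_le {n : Type*} [DecidableEq n] {Δ : Matrix n n ℝ}
    (hΔ : ∀ i j, 0 ≤ Δ i j) {t : ℝ} (ht : t ∈ Icc (0 : ℝ) 1)
    (i j : n) : |(1 - t • Δ) i j - (1 : Matrix n n ℝ) i j| ≤ Δ i j := by
  rw [sub_apply, sub_sub_cancel_left, abs_neg, smul_apply, smul_eq_mul, abs_mul,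
    abs_of_nonneg ht.1, abs_of_nonneg (hΔ i j)]
  exact mul_le_of_le_one_left (hΔ i j) ht.2

variable {n : Type*} [Fintype n]

theorem mul_apply_nonneg {A B : Matrix n n ℝ} (hA : ∀ i j, 0 ≤ A i j) (hB : ∀ i j, 0 ≤ B i j)
    (i j : n) : 0 ≤ (A * B) i j :=
  Finset.sum_nonneg fun k _ => mul_nonneg (hA i k) (hB k j)

variable [DecidableEq n]

theorem inv_one_sub_nonneg_of_summable {X : Matrix n n ℝ} (hX : ∀ i j, 0 ≤ X i j)
    (hsum : Summable (X ^ ·)) (i j : n) : 0 ≤ (1 - X)⁻¹ i j := by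
  rw [inv_eq_left_inv hsum.tsum_pow_mul_one_sub]
  exact (Pi.hasSum.1 (Pi.hasSum.1 hsum.hasSum i) j).nonneg fun k => pow_apply_nonneg hX k i j

theorem eventually_inv_one_sub_smul_nonneg {B : Matrix n n ℝ} (hB : ∀ i j, 0 ≤ B i j) :
    ∀ᶠ h in 𝓝[≥] (0 : ℝ), ∀ i j, 0 ≤ (1 - h • B)⁻¹ i j := by
  let _ := Matrix.linftyOpNormedRing (n := n) (α := ℝ)
  let _ := Matrix.linftyOpNormedAlgebra (R := ℝ) (n := n) (α := ℝ)
  have _ : CompleteSpace (Matrix n n ℝ) := FiniteDimensional.complete ℝ _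
  have hlim : Tendsto (fun h : ℝ => ‖h‖ * ‖B‖) (𝓝 0) (𝓝 0) := by
    simpa using (continuous_norm.tendsto (0 : ℝ)).mul_const ‖B‖
  filter_upwards [self_mem_nhdsWithin,
    nhdsWithin_le_nhds (hlim.eventually (gt_mem_nhds one_pos))] with h (h0 : 0 ≤ h) hnorm
  exact inv_one_sub_nonneg_of_summable (fun i j => mul_nonneg h0 (hB i j))
    (summable_geometric_of_norm_lt_one ((norm_smul h B).trans_lt hnorm))

theorem inv_one_sub_nonneg_of_forall_isUnit {Δ : Matrix n n ℝ} (hΔ : ∀ i j, 0 ≤ Δ i j)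
    (hU : ∀ t ∈ Icc (0 : ℝ) 1, IsUnit (1 - t • Δ)) (i j : n) : 0 ≤ (1 - Δ)⁻¹ i j := by
  set s := {t : ℝ | ∀ i j, 0 ≤ (1 - t • Δ)⁻¹ i j}
  have hcont : ContinuousOn (fun t : ℝ => (1 - t • Δ)⁻¹) (Icc 0 1) := fun t ht =>
    ((continuousAt_matrix_inv _ (NormedRing.inverse_continuousAt
      ((isUnit_iff_isUnit_det _).1 (hU t ht)).unit)).comp (f := fun t : ℝ => 1 - t • Δ)
      (by fun_prop)).continuousWithinAt
  have hclosed : IsClosed (s ∩ Icc 0 1) := by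
    have hC : IsClosed {M : Matrix n n ℝ | ∀ i j, 0 ≤ M i j} := by
      simp only [ofPred_forall]
      exact isClosed_iInter fun i => isClosed_iInter fun j =>
        isClosed_le continuous_const (continuous_apply_apply i j)
    rw [inter_comm]
    exact hcont.preimage_isClosed_of_isClosed isClosed_Icc hC
  have h0 : (0 : ℝ) ∈ s := by
    intro i j
    rw [zero_smul, sub_zero, inv_one]
    exact zero_le_one_elem i j
  have h1 : (1 : ℝ) ∈ s := by
    refine hclosed.mem_of_ge_of_forall_exists_gt h0 zero_le_one fun t ⟨hts, ht⟩ => ?_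
    set B := (1 - t • Δ)⁻¹ * Δ
    have hdet := (isUnit_iff_isUnit_det _).1 (hU t (Ico_subset_Icc_self ht))
    have hB := eventually_inv_one_sub_smul_nonneg (mul_apply_nonneg hts hΔ)
    obtain ⟨h, hB, hh⟩ := ((hB.filter_mono (nhdsWithin_mono _ Ioi_subset_Ici_self)).and
      (Ioc_mem_nhdsGT (sub_pos.2 ht.2))).exists
    have hfactor : 1 - (t + h) • Δ = (1 - t • Δ) * (1 - h • B) := by
      rw [Matrix.mul_sub, Matrix.mul_one, Matrix.mul_smul, mul_nonsing_inv_cancel_left _ _ hdet,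
        add_smul]
      abel
    refine ⟨t + h, fun i j => ?_, by linarith [hh.1], by linarith [hh.2]⟩
    rw [hfactor, mul_inv_rev]
    exact mul_apply_nonneg hB hts i j
  simpa using h1 i j

theorem le_mulVec_of_mulVec_le {M A : Matrix n n ℝ} (hM : ∀ i j, 0 ≤ M i j) (hMA : M * A = 1)
    {u w : n → ℝ} (h : A *ᵥ u ≤ w) : u ≤ M *ᵥ w :=
  calc u = M *ᵥ (A *ᵥ u) := by rw [mulVec_mulVec, hMA, one_mulVec]
    _ ≤ M *ᵥ w := fun k => Finset.sum_le_sum fun l _ => mul_le_mul_of_nonneg_left (h l) (hM k l)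

section UnitMidpoint

variable {Δ : Matrix n n ℝ}

theorem mul_inv_one_sub (hU : IsUnit (1 - Δ)) : Δ * (1 - Δ)⁻¹ = (1 - Δ)⁻¹ - 1 := by
  have := mul_nonsing_inv _ ((isUnit_iff_isUnit_det _).1 hU)
  rw [sub_mul, one_mul] at this
  exact eq_sub_of_add_eq (sub_eq_iff_eq_add'.1 this).symm

theorem one_le_inv_one_sub_apply_self (hΔ : ∀ i j, 0 ≤ Δ i j) (hM : ∀ i j, 0 ≤ (1 - Δ)⁻¹ i j)
    (hU : IsUnit (1 - Δ)) (j : n) : 1 ≤ (1 - Δ)⁻¹ j j := by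
  have h := congr_fun (congr_fun (mul_inv_one_sub hU) j) j
  rw [sub_apply, one_apply_eq] at h
  linarith [mul_apply_nonneg hΔ hM j j]

section SolutionBounds

variable {j : n} {x : n → ℝ}

theorem one_sub_mulVec_abs_le (hx : |x - Pi.single j 1| ≤ Δ *ᵥ |x|) :
    (1 - Δ) *ᵥ |x| ≤ |x| - |x - Pi.single j 1| := by
  rw [sub_mulVec, one_mulVec]
  exact sub_le_sub_left hx _

theorem abs_le_col_inv_one_sub (hM : ∀ i j, 0 ≤ (1 - Δ)⁻¹ i j) (hU : IsUnit (1 - Δ))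
    (hx : |x - Pi.single j 1| ≤ Δ *ᵥ |x|) : |x| ≤ ((1 - Δ)⁻¹).col j := by
  rw [← mulVec_single_one]
  refine le_mulVec_of_mulVec_le hM (nonsing_inv_mul _ ((isUnit_iff_isUnit_det _).1 hU))
    ((one_sub_mulVec_abs_le hx).trans fun k => ?_)
  have he : 0 ≤ (Pi.single j 1 : n → ℝ) k := by rw [Pi.single_apply]; split_ifs <;> norm_num
  calc (|x| - |x - Pi.single j 1|) k ≤ |x k - (x - Pi.single j 1 : n → ℝ) k| :=
        abs_sub_abs_le_abs_sub _ _
    _ = (Pi.single j 1 : n → ℝ) k := by rw [Pi.sub_apply, sub_sub_cancel, abs_of_nonneg he]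

theorem div_two_mul_sub_one_le_apply_self (hΔ : ∀ i j, 0 ≤ Δ i j)
    (hM : ∀ i j, 0 ≤ (1 - Δ)⁻¹ i j) (hU : IsUnit (1 - Δ))
    (hx : |x - Pi.single j 1| ≤ Δ *ᵥ |x|) :
    (1 - Δ)⁻¹ j j / (2 * (1 - Δ)⁻¹ j j - 1) ≤ x j := by
  have hm := one_le_inv_one_sub_apply_self hΔ hM hU j
  -- For `x j ≤ 0` this bound reads `-x j ≤ -m_jj`, which is absurd.
  have hbound := le_mulVec_of_mulVec_le (w := (|x j| + x j - 1) • Pi.single j 1) hM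
    (nonsing_inv_mul _ ((isUnit_iff_isUnit_det _).1 hU))
    ((one_sub_mulVec_abs_le hx).trans fun k => ?_) j
  · rw [mulVec_smul, mulVec_single_one, Pi.smul_apply, col_apply, smul_eq_mul,
      Pi.abs_apply] at hbound
    have hxj : 0 < x j := by
      by_contra! h
      rw [abs_of_nonpos h] at hbound
      nlinarith
    rw [abs_of_pos hxj] at hbound
    rw [div_le_iff₀ (by linarith)]
    linarith
  · rcases eq_or_ne k j with rfl | hk
    · simp only [Pi.sub_apply, Pi.abs_apply, Pi.single_eq_same, Pi.smul_apply, smul_eq_mul,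
        mul_one]
      linarith [neg_abs_le (x k - 1)]
    · simp [hk]

theorem abs_sub_single_le_of_abs_eq_smul_col (hU : IsUnit (1 - Δ)) {t : ℝ}
    (ht : 1 ≤ t * (2 * (1 - Δ)⁻¹ j j - 1)) (ht₁ : t ≤ 1)
    (habs : |x| = t • ((1 - Δ)⁻¹).col j) (hxj : x j = t * (1 - Δ)⁻¹ j j) :
    |x - Pi.single j 1| ≤ Δ *ᵥ |x| := by
  rw [habs, mulVec_smul, ← mulVec_single_one, mulVec_mulVec, mul_inv_one_sub hU, sub_mulVec,
    one_mulVec, mulVec_single_one]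
  intro k
  rcases eq_or_ne k j with rfl | hk
  · simp only [Pi.abs_apply, Pi.sub_apply, Pi.single_eq_same, hxj, Pi.smul_apply, col_apply,
      smul_eq_mul]
    rw [abs_le]
    constructor <;> linarith
  · simpa [hk] using (congr_fun habs k).le

end SolutionBounds

theorem setOf_exists_inv_apply_eq (hΔ : ∀ i j, 0 ≤ Δ i j)
    (hReg : ∀ A : Matrix n n ℝ, (∀ i j, |A i j - (1 : Matrix n n ℝ) i j| ≤ Δ i j) → IsUnit A)
    (i j : n) :
    {v : ℝ | ∃ A : Matrix n n ℝ, (∀ k l, |A k l - (1 : Matrix n n ℝ) k l| ≤ Δ k l) ∧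
      v = A⁻¹ i j} = (· i) '' {x | |x - Pi.single j 1| ≤ Δ *ᵥ |x|} := by
  ext v
  constructor
  · rintro ⟨A, hA, rfl⟩
    have hAx : A *ᵥ (A⁻¹ *ᵥ Pi.single j 1) = Pi.single j 1 := by
      rw [mulVec_mulVec, mul_nonsing_inv _ ((isUnit_iff_isUnit_det A).1 (hReg A hA)), one_mulVec]
    exact ⟨_, by simpa using abs_mulVec_sub_le_of_mulVec_eq hA hAx, by simp⟩
  · rintro ⟨x, hx, rfl⟩
    obtain ⟨A, hA, hAx⟩ := exists_mulVec_eq_of_abs_sub_le (Ac := 1) hΔ (by rwa [one_mulVec])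
    refine ⟨A, hA, ?_⟩
    calc x i = (A⁻¹ *ᵥ (A *ᵥ x)) i := by
          rw [mulVec_mulVec, nonsing_inv_mul _ ((isUnit_iff_isUnit_det A).1 (hReg A hA)),
            one_mulVec]
      _ = A⁻¹ i j := by rw [hAx, mulVec_single_one, col_apply]

theorem isGreatest_image_apply (hΔ : ∀ i j, 0 ≤ Δ i j) (hM : ∀ i j, 0 ≤ (1 - Δ)⁻¹ i j)
    (hU : IsUnit (1 - Δ)) (i j : n) :
    IsGreatest ((· i) '' {x | |x - Pi.single j 1| ≤ Δ *ᵥ |x|}) ((1 - Δ)⁻¹ i j) := by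
  refine ⟨⟨((1 - Δ)⁻¹).col j,
    abs_sub_single_le_of_abs_eq_smul_col hU (t := 1) ?_ le_rfl ?_ (by simp), rfl⟩, ?_⟩
  · linarith [one_le_inv_one_sub_apply_self hΔ hM hU j]
  · ext k
    simp [abs_of_nonneg (hM k j)]
  · rintro _ ⟨x, hx, rfl⟩
    exact (le_abs_self _).trans (abs_le_col_inv_one_sub hM hU hx i)

theorem isLeast_image_apply_of_ne (hΔ : ∀ i j, 0 ≤ Δ i j) (hM : ∀ i j, 0 ≤ (1 - Δ)⁻¹ i j)
    (hU : IsUnit (1 - Δ)) {i j : n} (hij : i ≠ j) :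
    IsLeast ((· i) '' {x | |x - Pi.single j 1| ≤ Δ *ᵥ |x|}) (-(1 - Δ)⁻¹ i j) := by
  set x := Function.update (((1 - Δ)⁻¹).col j) i (-(1 - Δ)⁻¹ i j)
  refine ⟨⟨x, abs_sub_single_le_of_abs_eq_smul_col hU (t := 1) ?_ le_rfl ?_ ?_, by simp [x]⟩, ?_⟩
  · linarith [one_le_inv_one_sub_apply_self hΔ hM hU j]
  · ext k
    rcases eq_or_ne k i with rfl | hk <;> simp [x, *, abs_of_nonneg (hM k j)]
  · simp [x, hij.symm]
  · rintro _ ⟨x, hx, rfl⟩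
    exact neg_le_of_abs_le (abs_le_col_inv_one_sub hM hU hx i)

theorem isLeast_image_apply_self (hΔ : ∀ i j, 0 ≤ Δ i j) (hM : ∀ i j, 0 ≤ (1 - Δ)⁻¹ i j)
    (hU : IsUnit (1 - Δ)) (j : n) :
    IsLeast ((· j) '' {x | |x - Pi.single j 1| ≤ Δ *ᵥ |x|})
      ((1 - Δ)⁻¹ j j / (2 * (1 - Δ)⁻¹ j j - 1)) := by
  have hm := one_le_inv_one_sub_apply_self hΔ hM hU j
  set t := (2 * (1 - Δ)⁻¹ j j - 1)⁻¹ with ht_def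
  have ht : 0 ≤ t := inv_nonneg.2 (by linarith)
  set x : n → ℝ := fun k => if k = j then t * (1 - Δ)⁻¹ k j else -(t * (1 - Δ)⁻¹ k j)
  refine ⟨⟨x, abs_sub_single_le_of_abs_eq_smul_col hU (inv_mul_cancel₀ (by linarith)).ge
    (inv_le_one_of_one_le₀ (by linarith)) ?_ (by simp [x, ht_def]), ?_⟩, ?_⟩
  · ext k
    have := mul_nonneg ht (hM k j)
    simp only [x, Pi.abs_apply, Pi.smul_apply, col_apply, smul_eq_mul, ← ht_def]
    split_ifs <;> simp [abs_of_nonneg this]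
  · simp [x, ht_def, div_eq_inv_mul]
  · rintro _ ⟨x, hx, rfl⟩
    exact div_two_mul_sub_one_le_apply_self hΔ hM hU hx

end UnitMidpoint

end Matrix

/-- Explicit inverse of an interval matrix with unit midpoint: if the interval
matrix `[I - Δ, I + Δ]` is regular, `M = (I - Δ)⁻¹` and `k_j = 2 m_jj² / (2 m_jj - 1)`,
then entrywise the minimum of `(A⁻¹)_{ij}` over the interval matrix is
`(-M + D_k)_{ij}` and the maximum is `M_{ij}`. -/
theorem interval_inverse_unit_midpoint {n : ℕ} (Δ : Matrix (Fin n) (Fin n) ℝ)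
    (hΔ : ∀ i j, 0 ≤ Δ i j)
    (hReg : ∀ A : Matrix (Fin n) (Fin n) ℝ,
      (∀ i j, |A i j - (1 : Matrix (Fin n) (Fin n) ℝ) i j| ≤ Δ i j) → IsUnit A) :
    let M : Matrix (Fin n) (Fin n) ℝ := (1 - Δ)⁻¹
    let k : Fin n → ℝ := fun j => 2 * (M j j) ^ 2 / (2 * M j j - 1)
    ∀ i j : Fin n,
      sInf {v : ℝ | ∃ A : Matrix (Fin n) (Fin n) ℝ,
          (∀ k' l, |A k' l - (1 : Matrix (Fin n) (Fin n) ℝ) k' l| ≤ Δ k' l) ∧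
          v = A⁻¹ i j} = (-M + Matrix.diagonal k) i j ∧
      sSup {v : ℝ | ∃ A : Matrix (Fin n) (Fin n) ℝ,
          (∀ k' l, |A k' l - (1 : Matrix (Fin n) (Fin n) ℝ) k' l| ≤ Δ k' l) ∧
          v = A⁻¹ i j} = M i j := by
  intro M k i j
  have hU : IsUnit (1 - Δ) := by
    simpa using hReg _ (abs_one_sub_smul_sub_one_le hΔ (right_mem_Icc.2 zero_le_one))
  have hM : ∀ a b, 0 ≤ M a b := inv_one_sub_nonneg_of_forall_isUnit hΔ fun t ht =>
    hReg _ (abs_one_sub_smul_sub_one_le hΔ ht)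
  rw [setOf_exists_inv_apply_eq hΔ hReg]
  refine ⟨IsLeast.csInf_eq ?_, (isGreatest_image_apply hΔ hM hU i j).csSup_eq⟩
  rcases eq_or_ne i j with rfl | hij
  · have hm : 2 * M i i - 1 ≠ 0 := by linarith [one_le_inv_one_sub_apply_self hΔ hM hU i]
    have hk : (-M + diagonal k) i i = M i i / (2 * M i i - 1) := by
      rw [Matrix.add_apply, Matrix.neg_apply, diagonal_apply_eq]
      simp only [k]
      rw [eq_div_iff hm, add_mul, div_mul_cancel₀ _ hm]
      ring
    rw [hk]
    exact isLeast_image_apply_self hΔ hM hU i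
  · simpa [hij] using isLeast_image_apply_of_ne hΔ hM hU hij
end

section
/- Inverse nonnegativity (Kuttler): Let A̲, A̅ ∈ ℝ^{n×n} with A̲ ≤ A̅ entrywise. If A̲ and A̅ are both invertible with A̲^{-1} ≥ 0 and A̅^{-1} ≥ 0 entrywise, then every real matrix A with A̲ ≤ A ≤ A̅ entrywise is invertible and satisfies A̅^{-1} ≤ A^{-1} ≤ A̲^{-1} entrywise; in particular A^{-1} ≥ 0 entrywise. -/
open Filter Finset

private lemma ent_mul_nonneg {n : ℕ} {A B : Matrix (Fin n) (Fin n) ℝ}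
    (hA : ∀ i j, 0 ≤ A i j) (hB : ∀ i j, 0 ≤ B i j) :
    ∀ i j, 0 ≤ (A * B) i j := by
  intro i j
  rw [Matrix.mul_apply]
  exact Finset.sum_nonneg fun k _ => mul_nonneg (hA i k) (hB k j)

private lemma ent_mul_le_mul {n : ℕ} {A B C D : Matrix (Fin n) (Fin n) ℝ}
    (hA0 : ∀ i j, 0 ≤ A i j) (hAB : ∀ i j, A i j ≤ B i j)
    (hC0 : ∀ i j, 0 ≤ C i j) (hCD : ∀ i j, C i j ≤ D i j) :
    ∀ i j, (A * C) i j ≤ (B * D) i j := by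
  intro i j
  rw [Matrix.mul_apply, Matrix.mul_apply]
  refine Finset.sum_le_sum fun k _ => ?_
  exact mul_le_mul (hAB i k) (hCD k j) (hC0 k j) (le_trans (hA0 i k) (hAB i k))

private lemma ent_one_nonneg {n : ℕ} : ∀ i j, (0:ℝ) ≤ (1 : Matrix (Fin n) (Fin n) ℝ) i j := by
  intro i j
  by_cases h : i = j <;> simp [Matrix.one_apply, h]

/-- Inverse nonnegativity (Kuttler): if `A̲ ≤ A̅` entrywise, both are invertible
and both inverses are entrywise nonnegative, then every `A` with
`A̲ ≤ A ≤ A̅` entrywise is invertible and `A̅⁻¹ ≤ A⁻¹ ≤ A̲⁻¹` entrywise; in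
particular `A⁻¹ ≥ 0` entrywise. -/
theorem inverse_nonnegative_kuttler {n : ℕ} (Al Au : Matrix (Fin n) (Fin n) ℝ)
    (hle : ∀ i j, Al i j ≤ Au i j)
    (hAl : IsUnit Al) (hAu : IsUnit Au)
    (hAlInv : ∀ i j, 0 ≤ Al⁻¹ i j) (hAuInv : ∀ i j, 0 ≤ Au⁻¹ i j) :
    ∀ A : Matrix (Fin n) (Fin n) ℝ, (∀ i j, Al i j ≤ A i j ∧ A i j ≤ Au i j) →
      IsUnit A ∧ (∀ i j, Au⁻¹ i j ≤ A⁻¹ i j ∧ A⁻¹ i j ≤ Al⁻¹ i j) ∧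
      (∀ i j, 0 ≤ A⁻¹ i j) := by
  intro A hA
  set Y := Au⁻¹ with hYdef
  set Z := Al⁻¹ with hZdef
  have hY : ∀ i j, 0 ≤ Y i j := hAuInv
  have hZ : ∀ i j, 0 ≤ Z i j := hAlInv
  have hAud : IsUnit Au.det := (Matrix.isUnit_iff_isUnit_det Au).mp hAu
  have hAld : IsUnit Al.det := (Matrix.isUnit_iff_isUnit_det Al).mp hAl
  have hYAu : Y * Au = 1 := Matrix.nonsing_inv_mul Au hAud
  have hAuY : Au * Y = 1 := Matrix.mul_nonsing_inv Au hAud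
  have hZAl : Z * Al = 1 := Matrix.nonsing_inv_mul Al hAld
  have hAlZ : Al * Z = 1 := Matrix.mul_nonsing_inv Al hAld
  set P := Y * (Au - A) with hPdef
  set Q := Y * (Au - Al) with hQdef
  set S := Z * Au with hSdef
  have hP0 : ∀ i j, 0 ≤ P i j := by
    refine ent_mul_nonneg hY fun i j => ?_
    rw [Matrix.sub_apply]
    exact sub_nonneg.2 (hA i j).2
  have hPQ : ∀ i j, P i j ≤ Q i j := by
    have hd : Q - P = Y * (A - Al) := by
      rw [hPdef, hQdef, ← mul_sub, sub_sub_sub_cancel_left]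
    intro i j
    have h0 : 0 ≤ (Y * (A - Al)) i j := by
      refine ent_mul_nonneg hY (fun i j => ?_) i j
      rw [Matrix.sub_apply]
      exact sub_nonneg.2 (hA i j).1
    rw [← hd, Matrix.sub_apply] at h0
    linarith
  have hQ0 : ∀ i j, 0 ≤ Q i j := fun i j => le_trans (hP0 i j) (hPQ i j)
  -- S = 1 + Z*(Au - Al), hence S ≥ 0 entrywise
  have hS1 : S = 1 + Z * (Au - Al) := by
    rw [hSdef, mul_sub, hZAl]; abel
  have hS0 : ∀ i j, 0 ≤ S i j := by
    intro i j
    rw [hS1, Matrix.add_apply]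
    exact add_nonneg (ent_one_nonneg i j)
      (ent_mul_nonneg hZ (fun i j => by rw [Matrix.sub_apply]; exact sub_nonneg.2 (hle i j)) i j)
  -- key identity: Q * S = S - 1, i.e. S = 1 + Q * S
  have hQS : 1 + Q * S = S := by
    have hQ1 : Q = 1 - Y * Al := by rw [hQdef, mul_sub, hYAu]
    rw [hQ1, hSdef, sub_mul, one_mul, mul_assoc, ← mul_assoc Al Z Au, hAlZ, one_mul, hYAu]
    abel
  -- powers of P and Q are entrywise nonnegative, and P^k ≤ Q^k
  have hPk : ∀ k, ∀ i j, 0 ≤ (P ^ k) i j := by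
    intro k
    induction k with
    | zero => simpa [pow_zero] using ent_one_nonneg
    | succ k ih => rw [pow_succ]; exact ent_mul_nonneg ih hP0
  have hQk : ∀ k, ∀ i j, 0 ≤ (Q ^ k) i j := by
    intro k
    induction k with
    | zero => simpa [pow_zero] using ent_one_nonneg
    | succ k ih => rw [pow_succ]; exact ent_mul_nonneg ih hQ0
  have hPQk : ∀ k, ∀ i j, (P ^ k) i j ≤ (Q ^ k) i j := by
    intro k
    induction k with
    | zero => simp [pow_zero]
    | succ k ih =>
        rw [pow_succ, pow_succ]
        exact ent_mul_le_mul (hPk k) ih hP0 hPQ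
  -- partial sums of the geometric series in Q are bounded by S
  have hTQS : ∀ m, ∀ i j, (∑ k ∈ Finset.range m, Q ^ k) i j ≤ S i j := by
    intro m
    induction m with
    | zero => intro i j; simpa using hS0 i j
    | succ m ih =>
        intro i j
        have hgeom : ∑ k ∈ Finset.range (m+1), Q ^ k
            = 1 + Q * ∑ k ∈ Finset.range m, Q ^ k := by
          rw [geom_sum_succ]; abel
        have hTQ0 : ∀ i j, 0 ≤ (∑ k ∈ Finset.range m, Q ^ k) i j := by
          intro i j
          rw [Matrix.sum_apply]
          exact Finset.sum_nonneg fun k _ => hQk k i j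
        have hmul : (Q * ∑ k ∈ Finset.range m, Q ^ k) i j ≤ (Q * S) i j :=
          ent_mul_le_mul hQ0 (fun i j => le_refl _) hTQ0 ih i j
        calc (∑ k ∈ Finset.range (m+1), Q ^ k) i j
            = (1 : Matrix (Fin n) (Fin n) ℝ) i j + (Q * ∑ k ∈ Finset.range m, Q ^ k) i j := by
              rw [hgeom, Matrix.add_apply]
          _ ≤ (1 : Matrix (Fin n) (Fin n) ℝ) i j + (Q * S) i j := by linarith
          _ = (1 + Q * S) i j := by rw [Matrix.add_apply]
          _ = S i j := by rw [hQS]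
  set T : ℕ → Matrix (Fin n) (Fin n) ℝ := fun m => ∑ k ∈ Finset.range m, P ^ k with hTdef
  have hTS : ∀ m, ∀ i j, T m i j ≤ S i j := by
    intro m i j
    refine le_trans ?_ (hTQS m i j)
    rw [hTdef]
    simp only [Matrix.sum_apply]
    exact Finset.sum_le_sum fun k _ => hPQk k i j
  have hTsucc : ∀ m, ∀ i j, T (m+1) i j = T m i j + (P ^ m) i j := by
    intro m i j
    rw [hTdef]
    simp [Finset.sum_range_succ, Matrix.sum_apply]
  have hTmono : ∀ i j, Monotone fun m => T m i j := by
    intro i j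
    apply monotone_nat_of_le_succ
    intro m
    rw [hTsucc m i j]
    linarith [hPk m i j]
  set X : Matrix (Fin n) (Fin n) ℝ := Matrix.of fun i j => ⨆ m, T m i j with hXdef
  have hbdd : ∀ i j, BddAbove (Set.range fun m => T m i j) := by
    intro i j
    exact ⟨S i j, by rintro _ ⟨m, rfl⟩; exact hTS m i j⟩
  have hXij : ∀ i j, X i j = ⨆ m, T m i j := fun i j => rfl
  have htend : ∀ i j, Tendsto (fun m => T m i j) atTop (nhds (X i j)) := by
    intro i j
    rw [hXij]
    exact tendsto_atTop_ciSup (hTmono i j) (hbdd i j)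
  have hTX : ∀ m i j, T m i j ≤ X i j := by
    intro m i j
    rw [hXij]
    exact le_ciSup (hbdd i j) m
  have hXS : ∀ i j, X i j ≤ S i j := by
    intro i j
    rw [hXij]
    exact ciSup_le fun m => hTS m i j
  have hX1 : ∀ i j, (1 : Matrix (Fin n) (Fin n) ℝ) i j ≤ X i j := by
    intro i j
    have h1 : T 1 i j = (1 : Matrix (Fin n) (Fin n) ℝ) i j := by
      rw [hTdef]; simp
    rw [← h1]; exact hTX 1 i j
  have hX0 : ∀ i j, 0 ≤ X i j := fun i j => le_trans (ent_one_nonneg i j) (hX1 i j)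
  -- P^m → 0 entrywise
  have hPm0 : ∀ i j, Tendsto (fun m => (P ^ m) i j) atTop (nhds 0) := by
    intro i j
    have h1 : Tendsto (fun m => T (m+1) i j - T m i j) atTop (nhds (X i j - X i j)) :=
      Tendsto.sub ((htend i j).comp (tendsto_add_atTop_nat 1)) (htend i j)
    rw [sub_self] at h1
    refine h1.congr fun m => ?_
    rw [hTsucc m i j]; ring
  -- (1 - P) * X = 1
  have hmain : (1 - P) * X = 1 := by
    ext i j
    have h1 : Tendsto (fun m => ((1 - P) * T m) i j) atTop (nhds (((1 - P) * X) i j)) := by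
      simp only [Matrix.mul_apply]
      exact tendsto_finset_sum _ fun k _ => ((htend k j).const_mul _)
    have h2 : ∀ m, ((1 - P) * T m) i j
        = (1 : Matrix (Fin n) (Fin n) ℝ) i j - (P ^ m) i j := by
      intro m
      have : (1 - P) * T m = 1 - P ^ m := by
        have h := mul_geom_sum P m
        rw [hTdef]
        have h2 : (1 - P) * ∑ k ∈ Finset.range m, P ^ k
            = -((P - 1) * ∑ k ∈ Finset.range m, P ^ k) := by
          rw [← neg_sub P 1, neg_mul]
        rw [h2, h, neg_sub]
      rw [this, Matrix.sub_apply]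
    have h3 : Tendsto (fun m => ((1 - P) * T m) i j) atTop
        (nhds ((1 : Matrix (Fin n) (Fin n) ℝ) i j)) := by
      have hc : Tendsto (fun _ : ℕ => (1 : Matrix (Fin n) (Fin n) ℝ) i j) atTop
          (nhds ((1 : Matrix (Fin n) (Fin n) ℝ) i j)) := tendsto_const_nhds
      have hcc := hc.sub (hPm0 i j)
      rw [sub_zero] at hcc
      exact hcc.congr fun m => (h2 m).symm
    exact tendsto_nhds_unique h1 h3
  have hX1P : X * (1 - P) = 1 := mul_eq_one_comm.mp hmain
  have hYA : Y * A = 1 - P := by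
    rw [hPdef, mul_sub, hYAu, sub_sub_cancel]
  have hXYA : (X * Y) * A = 1 := by
    rw [mul_assoc, hYA, hX1P]
  have hAunit : IsUnit A := by
    have : IsUnit A.det := Matrix.isUnit_det_of_left_inverse hXYA
    exact (Matrix.isUnit_iff_isUnit_det A).mpr this
  have hAinv : A⁻¹ = X * Y := Matrix.inv_eq_left_inv hXYA
  refine ⟨hAunit, ?_, ?_⟩
  · intro i j
    constructor
    · -- Y ≤ X*Y entrywise
      rw [hAinv]
      have h0 : 0 ≤ ((X - 1) * Y) i j :=
        ent_mul_nonneg (fun i j => by rw [Matrix.sub_apply]; exact sub_nonneg.2 (hX1 i j)) hY i j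
      have heq : (X - 1) * Y = X * Y - Y := by rw [sub_mul, one_mul]
      rw [heq, Matrix.sub_apply] at h0
      linarith
    · -- X*Y ≤ S*Y = Z entrywise
      rw [hAinv]
      have h1 : (X * Y) i j ≤ (S * Y) i j :=
        ent_mul_le_mul hX0 hXS hY (fun i j => le_refl _) i j
      have h2 : S * Y = Z := by
        rw [hSdef, mul_assoc, hAuY, mul_one]
      rw [h2] at h1
      exact h1
  · intro i j
    rw [hAinv]
    exact ent_mul_nonneg hX0 hY i j
end

section
/- Characterization of tolerance solutions: Let A_c, Δ ∈ ℝ^{m×n} with Δ ≥ 0 entrywise, b_c ∈ ℝ^m and δ ∈ ℝ^m with δ ≥ 0 entrywise. A vector x ∈ ℝ^n satisfies: for every real matrix A with |A − A_c| ≤ Δ entrywise there exists a real vector b with |b − b_c| ≤ δ entrywise such that A x = b, if and only if |A_c x − b_c| ≤ −Δ |x| + δ holds componentwise. -/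
/-- Characterization of tolerance solutions: `x` is a tolerance solution of the
interval system (for every `A` in the interval matrix there is `b` in the
interval vector with `A x = b`) iff `|A_c x - b_c| ≤ -Δ |x| + δ` componentwise. -/
theorem tolerance_solution_characterization {m n : ℕ}
    (Ac Δ : Matrix (Fin m) (Fin n) ℝ) (bc δ : Fin m → ℝ)
    (hΔ : ∀ i j, 0 ≤ Δ i j) (hδ : ∀ i, 0 ≤ δ i) (x : Fin n → ℝ) :
    (∀ A : Matrix (Fin m) (Fin n) ℝ, (∀ i j, |A i j - Ac i j| ≤ Δ i j) →
        ∃ b : Fin m → ℝ, (∀ i, |b i - bc i| ≤ δ i) ∧ A.mulVec x = b) ↔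
      (∀ i, |Ac.mulVec x i - bc i| ≤ -(Δ.mulVec (fun j => |x j|) i) + δ i) := by
  constructor
  · intro h i
    set u : ℝ := Ac.mulVec x i - bc i with hu
    set s : ℝ := if 0 ≤ u then 1 else -1 with hs
    set t : Fin n → ℝ := fun j => if 0 ≤ x j then 1 else -1 with ht
    have hs1 : |s| = 1 := by rw [hs]; split <;> simp
    have htx : ∀ j, t j * x j = |x j| := by
      intro j
      simp only [ht]
      split
      · rw [one_mul, abs_of_nonneg ‹_›]
      · rw [abs_of_neg (lt_of_not_ge ‹_›)]; ring
    have ht1 : ∀ j, |t j| = 1 := by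
      intro j; simp only [ht]; split <;> simp
    set A : Matrix (Fin m) (Fin n) ℝ :=
      fun i' j => Ac i' j + (if i' = i then s * Δ i j * t j else 0) with hAdef
    have hAmem : ∀ i' j, |A i' j - Ac i' j| ≤ Δ i' j := by
      intro i' j
      simp only [hAdef]
      rw [add_sub_cancel_left]
      split
      · rename_i hii
        subst hii
        rw [abs_mul, abs_mul, hs1, ht1, one_mul, mul_one, abs_of_nonneg (hΔ _ _)]
      · simpa using hΔ i' j
    obtain ⟨b, hb, hAb⟩ := h A hAmem
    have hAx : A.mulVec x i = Ac.mulVec x i + s * Δ.mulVec (fun j => |x j|) i := by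
      simp only [hAdef, Matrix.mulVec, dotProduct, if_pos rfl]
      rw [Finset.mul_sum, ← Finset.sum_add_distrib]
      apply Finset.sum_congr rfl
      intro j _
      simp only [if_true]
      rw [← htx j]
      ring
    have hkey : |A.mulVec x i - bc i| ≤ δ i := by
      rw [hAb]; exact hb i
    have hD : 0 ≤ Δ.mulVec (fun j => |x j|) i := by
      simp only [Matrix.mulVec, dotProduct]
      apply Finset.sum_nonneg
      intro j _
      exact mul_nonneg (hΔ i j) (abs_nonneg _)
    have habs : |u| + Δ.mulVec (fun j => |x j|) i ≤ δ i := by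
      have : A.mulVec x i - bc i = u + s * Δ.mulVec (fun j => |x j|) i := by
        rw [hAx, hu]; ring
      rw [this] at hkey
      rcases le_or_gt 0 u with hpos | hneg
      · rw [hs, if_pos hpos, one_mul] at hkey
        rwa [abs_of_nonneg hpos, ← abs_of_nonneg (add_nonneg hpos hD)]
      · rw [hs, if_neg (not_le.mpr hneg), neg_one_mul] at hkey
        rw [abs_of_neg hneg]
        have : |u + -(Δ.mulVec (fun j => |x j|) i)| = -u + Δ.mulVec (fun j => |x j|) i := by
          rw [abs_of_nonpos (by linarith)]; ring
        linarith [this ▸ hkey]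
    linarith [habs]
  · intro h A hA
    refine ⟨A.mulVec x, fun i => ?_, rfl⟩
    have h1 : |A.mulVec x i - Ac.mulVec x i| ≤ Δ.mulVec (fun j => |x j|) i := by
      simp only [Matrix.mulVec, dotProduct]
      rw [← Finset.sum_sub_distrib]
      calc |∑ j, (A i j * x j - Ac i j * x j)| ≤ ∑ j, |A i j * x j - Ac i j * x j| :=
            Finset.abs_sum_le_sum_abs _ _
        _ ≤ ∑ j, Δ i j * |x j| := by
            apply Finset.sum_le_sum
            intro j _
            rw [← sub_mul, abs_mul]
            exact mul_le_mul_of_nonneg_right (hA i j) (abs_nonneg _)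
    have h2 := h i
    have h3 : |A.mulVec x i - bc i| ≤ |Ac.mulVec x i - bc i| + |A.mulVec x i - Ac.mulVec x i| := by
      have := abs_sub_abs_le_abs_sub (A.mulVec x i - bc i) (Ac.mulVec x i - bc i)
      calc |A.mulVec x i - bc i|
          = |(Ac.mulVec x i - bc i) + (A.mulVec x i - Ac.mulVec x i)| := by ring_nf
        _ ≤ |Ac.mulVec x i - bc i| + |A.mulVec x i - Ac.mulVec x i| := abs_add_le _ _
    linarith
end

section
/- Characterization of control solutions: Let A_c, Δ ∈ ℝ^{m×n} with Δ ≥ 0 entrywise, b_c ∈ ℝ^m and δ ∈ ℝ^m with δ ≥ 0 entrywise. A vector x ∈ ℝ^n satisfies: for every real vector b with |b − b_c| ≤ δ entrywise there exists a real matrix A with |A − A_c| ≤ Δ entrywise such that A x = b, if and only if |A_c x − b_c| ≤ Δ |x| − δ holds componentwise. -/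
/-- Characterization of control solutions: `x` is a control solution of the
interval system (for every `b` in the interval vector there is `A` in the
interval matrix with `A x = b`) iff `|A_c x - b_c| ≤ Δ |x| - δ` componentwise. -/
theorem control_solution_characterization {m n : ℕ}
    (Ac Δ : Matrix (Fin m) (Fin n) ℝ) (bc δ : Fin m → ℝ)
    (hΔ : ∀ i j, 0 ≤ Δ i j) (hδ : ∀ i, 0 ≤ δ i) (x : Fin n → ℝ) :
    (∀ b : Fin m → ℝ, (∀ i, |b i - bc i| ≤ δ i) →
        ∃ A : Matrix (Fin m) (Fin n) ℝ, (∀ i j, |A i j - Ac i j| ≤ Δ i j) ∧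
          A.mulVec x = b) ↔
      (∀ i, |Ac.mulVec x i - bc i| ≤ Δ.mulVec (fun j => |x j|) i - δ i) := by
  set t : Fin m → ℝ := fun i => Δ.mulVec (fun j => |x j|) i with htdef
  have htexp : ∀ i, t i = ∑ j, Δ i j * |x j| := by
    intro i; simp [htdef, Matrix.mulVec, dotProduct]
  have ht0 : ∀ i, 0 ≤ t i := by
    intro i; rw [htexp]
    exact Finset.sum_nonneg fun j _ => mul_nonneg (hΔ i j) (abs_nonneg _)
  constructor
  · intro h i
    set s : ℝ := if 0 ≤ Ac.mulVec x i - bc i then 1 else (-1) with hs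
    have hs1 : |s| = 1 := by rw [hs]; split <;> simp
    have hss : s * s = 1 := by rw [hs]; split <;> norm_num
    have hsabs : s * (Ac.mulVec x i - bc i) = |Ac.mulVec x i - bc i| := by
      rw [hs]; split
      · rw [abs_of_nonneg ‹_›, one_mul]
      · rw [abs_of_neg (by linarith [not_le.mp ‹_›])]; ring
    have hbok : ∀ k, |(fun k => if k = i then bc i - s * δ i else bc k) k - bc k| ≤ δ k := by
      intro k
      by_cases hk : k = i
      · subst hk; simp [abs_mul, hs1, abs_of_nonneg (hδ k)]
      · simp [hk, hδ k]
    obtain ⟨A, hA, hAx⟩ :=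
      h (fun k => if k = i then bc i - s * δ i else bc k) hbok
    have hAi : A.mulVec x i = bc i - s * δ i := by rw [hAx]; simp
    have hb1 : |Ac.mulVec x i - A.mulVec x i| ≤ t i := by
        have heq : Ac.mulVec x i - A.mulVec x i = ∑ j, (Ac i j - A i j) * x j := by
          simp [Matrix.mulVec, dotProduct, sub_mul, Finset.sum_sub_distrib]
        rw [heq, htexp]
        calc |∑ j, (Ac i j - A i j) * x j| ≤ ∑ j, |(Ac i j - A i j) * x j| :=
              Finset.abs_sum_le_sum_abs _ _
          _ ≤ ∑ j, Δ i j * |x j| := Finset.sum_le_sum fun j _ => by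
              rw [abs_mul]
              exact mul_le_mul_of_nonneg_right
                (by rw [abs_sub_comm]; exact hA i j) (abs_nonneg _)
    have h1 : s * (Ac.mulVec x i - A.mulVec x i) ≤ |Ac.mulVec x i - A.mulVec x i| := by
      calc s * (Ac.mulVec x i - A.mulVec x i)
          ≤ |s * (Ac.mulVec x i - A.mulVec x i)| := le_abs_self _
        _ = |Ac.mulVec x i - A.mulVec x i| := by rw [abs_mul, hs1, one_mul]
    have heq2 : |Ac.mulVec x i - bc i|
        = s * (Ac.mulVec x i - A.mulVec x i) - δ i := by
      rw [← hsabs]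
      linear_combination s * hAi - δ i * hss
    rw [heq2]
    linarith
  · intro h b hb
    set sg : Fin n → ℝ := fun j => if x j < 0 then -1 else 1 with hsg
    have hsg1 : ∀ j, |sg j| = 1 := by intro j; rw [hsg]; dsimp only; split <;> simp
    have hsgx : ∀ j, sg j * x j = |x j| := by
      intro j; rw [hsg]; dsimp only; split
      · rw [abs_of_neg ‹_›]; ring
      · rw [abs_of_nonneg (not_lt.mp ‹_›), one_mul]
    set c : Fin m → ℝ := fun i =>
      if t i = 0 then 0 else (b i - Ac.mulVec x i) / t i with hc
    have hr : ∀ i, |b i - Ac.mulVec x i| ≤ t i := by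
      intro i
      have h1 := h i
      have h2 := hb i
      have h3 : |b i - Ac.mulVec x i| ≤ |b i - bc i| + |bc i - Ac.mulVec x i| :=
        abs_sub_le _ _ _
      have h4 : |bc i - Ac.mulVec x i| = |Ac.mulVec x i - bc i| := abs_sub_comm _ _
      have h5 : |Ac.mulVec x i - bc i| ≤ t i - δ i := h1
      linarith
    have hc1 : ∀ i, |c i| ≤ 1 := by
      intro i; rw [hc]; dsimp only; split
      · simp
      · have htpos : 0 < t i := lt_of_le_of_ne (ht0 i) (Ne.symm ‹_›)
        rw [abs_div, abs_of_pos htpos, div_le_one htpos]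
        exact hr i
    refine ⟨fun i j => Ac i j + c i * Δ i j * sg j, ?_, ?_⟩
    · intro i j
      have : |c i * Δ i j * sg j| = |c i| * Δ i j := by
        rw [abs_mul, abs_mul, hsg1, mul_one, abs_of_nonneg (hΔ i j)]
      calc |Ac i j + c i * Δ i j * sg j - Ac i j| = |c i| * Δ i j := by
            rw [add_sub_cancel_left, this]
        _ ≤ 1 * Δ i j := mul_le_mul_of_nonneg_right (hc1 i) (hΔ i j)
        _ = Δ i j := one_mul _
    · funext i
      have hsum : (Matrix.mulVec (fun i j => Ac i j + c i * Δ i j * sg j) x) i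
          = Ac.mulVec x i + c i * t i := by
        rw [htexp]
        simp only [Matrix.mulVec, dotProduct, add_mul, Finset.sum_add_distrib,
          Finset.mul_sum]
        congr 1
        apply Finset.sum_congr rfl
        intro j _
        rw [← hsgx j]
        ring
      rw [hsum]
      by_cases hti : t i = 0
      · have : b i - Ac.mulVec x i = 0 := by
          have := hr i
          rw [hti] at this
          have := abs_nonpos_iff.mp this
          linarith [abs_nonpos_iff.mp (hti ▸ hr i)]
        rw [hc]; dsimp only; rw [if_pos hti]
        linarith
      · rw [hc]; dsimp only; rw [if_neg hti, div_mul_cancel₀ _ hti]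
        ring
end

section
/- Strong solvability of interval linear inequalities yields a common solution: Let A_c, Δ ∈ ℝ^{m×n} with Δ ≥ 0 entrywise, b_c ∈ ℝ^m and δ ∈ ℝ^m with δ ≥ 0 entrywise. Suppose that for every real matrix A with |A − A_c| ≤ Δ entrywise and every real vector b with |b − b_c| ≤ δ entrywise, the system A x ≤ b has at least one solution x ∈ ℝ^n. Then there exists a single vector x ∈ ℝ^n such that A x ≤ b holds for every A with |A − A_c| ≤ Δ entrywise and every b with |b − b_c| ≤ δ entrywise. -/
/-!
If `(A_c + Δ) u + (Δ - A_c) w ≤ b_c - δ` has a solution with `u, w ≥ 0`, then `x = u - w` solves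
every system of the family, because `a (u - w) ≤ (a_c + Δ) u + (Δ - a_c) w` whenever
`|a - a_c| ≤ Δ`. Otherwise Farkas' lemma gives `y ≥ 0` with `yᵀ(A_c + Δ) ≥ 0`,
`yᵀ(Δ - A_c) ≥ 0` and `yᵀ(b_c - δ) < 0`. The first two say `|yᵀA_c| ≤ yᵀΔ`, so rescaling the
columns of `Δ` by factors in `[-1, 1]` gives `A = A_c + Δ diag(t)` with `yᵀA = 0`, and then
`A x ≤ b_c - δ` has no solution.

Farkas' lemma comes from separating a point from a closed cone; a finitely generated cone is closed
because, by the conic Carathéodory theorem, it is a finite union of cones over linearly independent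
families.
-/

open Set

namespace PointedCone

variable {ι E : Type*} [Fintype ι] [AddCommGroup E] [Module ℝ E]

lemma mem_hull_range_iff {v : ι → E} {x : E} :
    x ∈ hull ℝ (range v) ↔ ∃ c : ι → ℝ, 0 ≤ c ∧ ∑ i, c i • v i = x := by
  rw [hull, Submodule.mem_span_range_iff_exists_fun]
  constructor
  · rintro ⟨c, rfl⟩
    exact ⟨fun i => c i, fun i => (c i).2, rfl⟩
  · rintro ⟨c, hc, rfl⟩
    exact ⟨fun i => ⟨c i, hc i⟩, rfl⟩

lemma exists_nonneg_comb_support_ssubset_of_relation {v : ι → E} {c g : ι → ℝ} (hc : 0 ≤ c)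
    (hg : ∑ i, g i • v i = 0) (hgc : g.support ⊆ c.support) (hpos : ∃ i, 0 < g i) :
    ∃ d : ι → ℝ, 0 ≤ d ∧ ∑ i, d i • v i = ∑ i, c i • v i ∧ d.support ⊂ c.support := by
  classical
  obtain ⟨i₀, hi₀, hmin⟩ := Finset.exists_min_image {i | 0 < g i} (fun i => c i / g i)
    (by simpa [Finset.Nonempty] using hpos)
  rw [Finset.mem_filter_univ] at hi₀
  -- the largest step keeping `c - θ • g` nonnegative; it kills the coordinate `i₀`
  set θ := c i₀ / g i₀
  have hθ : 0 ≤ θ := div_nonneg (hc i₀) hi₀.le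
  refine ⟨c - θ • g, fun i => ?_, ?_, ?_⟩
  · have hci : 0 ≤ c i := hc i
    change 0 ≤ c i - θ * g i
    rcases lt_or_ge 0 (g i) with hgi | hgi
    · linarith [(le_div_iff₀ hgi).mp (hmin i (by simpa using hgi))]
    · linarith [mul_nonpos_of_nonneg_of_nonpos hθ hgi]
  · simp [sub_smul, Finset.sum_sub_distrib, mul_smul, ← Finset.smul_sum, hg]
  · have hsub : (c - θ • g).support ⊆ c.support :=
      (Function.support_sub _ _).trans
        (union_subset subset_rfl ((Function.support_const_smul_subset θ g).trans hgc))
    refine (ssubset_iff_of_subset hsub).mpr ⟨i₀, hgc hi₀.ne', ?_⟩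
    simp [θ, hi₀.ne']

lemma exists_nonneg_comb_support_ssubset {v : ι → E} {c : ι → ℝ} (hc : 0 ≤ c)
    (hdep : ¬ LinearIndepOn ℝ v c.support) :
    ∃ d : ι → ℝ, 0 ≤ d ∧ ∑ i, d i • v i = ∑ i, c i • v i ∧ d.support ⊂ c.support := by
  obtain ⟨f, hfc, hf, hf0⟩ := linearDepOn_iff'.mp hdep
  rw [Finsupp.linearCombination_apply, Finsupp.sum_fintype _ _ fun i => zero_smul ℝ (v i)] at hf
  have hsupp : Function.support f ⊆ c.support := by rw [Finsupp.fun_support_eq]; exact hfc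
  obtain ⟨i, hi⟩ := Finsupp.ne_iff.mp hf0
  rcases lt_or_gt_of_ne hi with hneg | hpos
  · refine exists_nonneg_comb_support_ssubset_of_relation (g := -f) hc ?_ ?_ ⟨i, by simpa⟩
    · simp [neg_smul, hf]
    · simpa using hsupp
  · exact exists_nonneg_comb_support_ssubset_of_relation hc hf hsupp ⟨i, hpos⟩

theorem exists_nonneg_comb_linearIndepOn_support (v : ι → E) {c : ι → ℝ} (hc : 0 ≤ c) :
    ∃ d : ι → ℝ, 0 ≤ d ∧ ∑ i, d i • v i = ∑ i, c i • v i ∧ LinearIndepOn ℝ v d.support := by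
  obtain ⟨_, ⟨d, ⟨hd, hsum⟩, rfl⟩, hmin⟩ := (wellFounded_lt (α := Set ι)).has_min
    (Function.support '' {d | 0 ≤ d ∧ ∑ i, d i • v i = ∑ i, c i • v i}) ⟨_, c, ⟨hc, rfl⟩, rfl⟩
  refine ⟨d, hd, hsum, by_contra fun hdep => ?_⟩
  obtain ⟨d', hd', hsum', hlt⟩ := exists_nonneg_comb_support_ssubset hd hdep
  exact hmin _ ⟨d', ⟨hd', hsum'.trans hsum⟩, rfl⟩ hlt

variable [TopologicalSpace E] [IsTopologicalAddGroup E] [ContinuousSMul ℝ E] [T2Space E]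

lemma isClosed_hull_range_of_linearIndependent {w : ι → E} (hw : LinearIndependent ℝ w) :
    IsClosed (hull ℝ (range w) : Set E) := by
  have hrange : (hull ℝ (range w) : Set E) = Fintype.linearCombination ℝ w '' Ici 0 := by
    ext x
    simp [mem_hull_range_iff, Fintype.linearCombination_apply]
  rw [hrange]
  exact (LinearMap.isClosedEmbedding_of_injective (LinearMap.ker_eq_bot.mpr
    hw.fintypeLinearCombination_injective)).isClosedMap _ isClosed_Ici

theorem isClosed_hull_range (v : ι → E) : IsClosed (hull ℝ (range v) : Set E) := by
  classical
  have hunion : (hull ℝ (range v) : Set E) =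
      ⋃ s ∈ {s : Set ι | LinearIndepOn ℝ v s}, hull ℝ (range fun i : s => v i) := by
    refine Subset.antisymm (fun x hx => ?_) (iUnion₂_subset fun s _ =>
      Submodule.span_mono (range_comp_subset_range _ v))
    obtain ⟨c, hc, rfl⟩ := mem_hull_range_iff.mp hx
    obtain ⟨d, hd, hsum, hli⟩ := exists_nonneg_comb_linearIndepOn_support v hc
    refine mem_biUnion (x := d.support) hli ?_
    rw [← hsum]
    refine Submodule.sum_mem _ fun i _ => ?_
    by_cases hi : d i = 0
    · simp [hi]
    · exact smul_mem _ (hd i) (subset_hull ⟨⟨i, hi⟩, rfl⟩)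
  rw [hunion]
  exact (toFinite _).isClosed_biUnion fun s hs => isClosed_hull_range_of_linearIndependent hs

end PointedCone

namespace Matrix

section Farkas

variable {m n : Type*} [Fintype m] [Fintype n]

theorem farkas_mulVec_eq (M : Matrix m n ℝ) (b : m → ℝ) (h : ¬∃ x, 0 ≤ x ∧ M *ᵥ x = b) :
    ∃ y, 0 ≤ y ᵥ* M ∧ y ⬝ᵥ b < 0 := by
  classical
  let C : ProperCone ℝ (m → ℝ) :=
    ⟨PointedCone.hull ℝ (range Mᵀ), PointedCone.isClosed_hull_range _⟩
  have hb : b ∉ C := by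
    intro hb
    obtain ⟨x, hx, hxb⟩ := PointedCone.mem_hull_range_iff.mp hb
    refine h ⟨x, hx, ?_⟩
    rw [← hxb, mulVec_eq_sum]
    simp
  obtain ⟨f, hfC, hfb⟩ := C.hyperplane_separation_point hb
  set y : m → ℝ := fun i => f fun j => if i = j then 1 else 0
  have hf : ∀ z, f z = y ⬝ᵥ z := fun z => by
    simpa [y, dotProduct, mul_comm] using LinearMap.pi_apply_eq_sum_univ (f : (m → ℝ) →ₗ[ℝ] ℝ) z
  refine ⟨y, fun j => ?_, by rwa [← hf]⟩
  have := hfC (Mᵀ j) (PointedCone.subset_hull ⟨j, rfl⟩)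
  rwa [hf] at this

theorem farkas_mulVec_le (M : Matrix m n ℝ) (b : m → ℝ) (h : ¬∃ x, 0 ≤ x ∧ M *ᵥ x ≤ b) :
    ∃ y, 0 ≤ y ∧ 0 ≤ y ᵥ* M ∧ y ⬝ᵥ b < 0 := by
  classical
  have hslack : ¬∃ z, 0 ≤ z ∧ fromCols M (1 : Matrix m m ℝ) *ᵥ z = b := by
    rintro ⟨z, hz, hzb⟩
    refine h ⟨z ∘ Sum.inl, fun j => hz _, fun i => ?_⟩
    rw [← hzb, fromCols_mulVec, one_mulVec]
    simpa using hz (.inr i)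
  obtain ⟨y, hy, hyb⟩ := farkas_mulVec_eq _ _ hslack
  rw [vecMul_fromCols, vecMul_one] at hy
  exact ⟨y, fun i => hy (.inr i), fun j => hy (.inl j), hyb⟩

lemma not_exists_mulVec_le_of_vecMul_eq_zero {A : Matrix m n ℝ} {b y : m → ℝ} (hy : 0 ≤ y)
    (hyA : y ᵥ* A = 0) (hyb : y ⬝ᵥ b < 0) : ¬∃ x, A *ᵥ x ≤ b := by
  rintro ⟨x, hx⟩
  have := dotProduct_le_dotProduct_of_nonneg_left hx hy
  rw [dotProduct_mulVec, hyA, zero_dotProduct] at this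
  linarith

end Farkas

variable {m n : Type*} [Fintype n] {Ac Δ : Matrix m n ℝ}

lemma mulVec_sub_le_of_abs_sub_le {A : Matrix m n ℝ} (hA : ∀ i j, |A i j - Ac i j| ≤ Δ i j)
    {u w : n → ℝ} (hu : 0 ≤ u) (hw : 0 ≤ w) :
    A *ᵥ (u - w) ≤ (Ac + Δ) *ᵥ u + (Δ - Ac) *ᵥ w := fun i => by
  simp only [Pi.add_apply, mulVec, dotProduct, ← Finset.sum_add_distrib]
  refine Finset.sum_le_sum fun j _ => ?_
  obtain ⟨hlo, hhi⟩ := abs_le.mp (hA i j)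
  simp only [Pi.sub_apply, add_apply, sub_apply]
  linarith [mul_nonneg (hu j) (sub_nonneg.mpr hhi),
    mul_nonneg (hw j) (neg_le_iff_add_nonneg.mp hlo)]

lemma exists_abs_sub_le_vecMul_eq_zero [Fintype m] (hΔ : ∀ i j, 0 ≤ Δ i j) {y : m → ℝ}
    (h₁ : 0 ≤ y ᵥ* (Ac + Δ)) (h₂ : 0 ≤ y ᵥ* (Δ - Ac)) :
    ∃ A : Matrix m n ℝ, (∀ i j, |A i j - Ac i j| ≤ Δ i j) ∧ y ᵥ* A = 0 := by
  classical
  set q := y ᵥ* Ac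
  set p := y ᵥ* Δ
  have hqp : ∀ j, |q j| ≤ p j := fun j => by
    have h₁ := h₁ j
    have h₂ := h₂ j
    simp only [vecMul_add, vecMul_sub, Pi.add_apply, Pi.sub_apply, Pi.zero_apply] at h₁ h₂
    exact abs_le.mpr ⟨by linarith, by linarith⟩
  set t : n → ℝ := fun j => -(q j / p j)
  refine ⟨Ac + Δ * diagonal t, fun i j => ?_, funext fun j => ?_⟩
  · have hp : 0 ≤ p j := (abs_nonneg _).trans (hqp j)
    have ht : |t j| ≤ 1 := by
      rw [abs_neg, abs_div, abs_of_nonneg hp]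
      exact div_le_one_of_le₀ (hqp j) hp
    rw [add_apply, add_sub_cancel_left, mul_diagonal, abs_mul, abs_of_nonneg (hΔ i j)]
    exact mul_le_of_le_one_right (hΔ i j) ht
  · rw [vecMul_add, ← vecMul_vecMul, Pi.add_apply, vecMul_diagonal]
    change q j + p j * -(q j / p j) = 0
    by_cases hp : p j = 0
    · simp [hp, abs_nonpos_iff.mp (hp ▸ hqp j)]
    · rw [mul_neg, mul_div_cancel₀ _ hp, add_neg_cancel]

end Matrix

open Matrix in
/-- Strong solvability of interval linear inequalities yields a common solution:
if every system `A x ≤ b` with `A` in `[A_c - Δ, A_c + Δ]` and `b` in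
`[b_c - δ, b_c + δ]` has a solution, then there is a single `x` solving all of
them simultaneously. -/
theorem strong_solvability_common_solution {m n : ℕ}
    (Ac Δ : Matrix (Fin m) (Fin n) ℝ) (bc δ : Fin m → ℝ)
    (hΔ : ∀ i j, 0 ≤ Δ i j) (hδ : ∀ i, 0 ≤ δ i)
    (hStrong : ∀ (A : Matrix (Fin m) (Fin n) ℝ) (b : Fin m → ℝ),
      (∀ i j, |A i j - Ac i j| ≤ Δ i j) → (∀ i, |b i - bc i| ≤ δ i) →
      ∃ x : Fin n → ℝ, ∀ i, A.mulVec x i ≤ b i) :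
    ∃ x : Fin n → ℝ, ∀ (A : Matrix (Fin m) (Fin n) ℝ) (b : Fin m → ℝ),
      (∀ i j, |A i j - Ac i j| ≤ Δ i j) → (∀ i, |b i - bc i| ≤ δ i) →
      ∀ i, A.mulVec x i ≤ b i := by
  by_cases hfeas : ∃ z, 0 ≤ z ∧ fromCols (Ac + Δ) (Δ - Ac) *ᵥ z ≤ bc - δ
  · obtain ⟨z, hz, hMz⟩ := hfeas
    refine ⟨z ∘ Sum.inl - z ∘ Sum.inr, fun A b hA hb i => ?_⟩
    calc (A *ᵥ (z ∘ Sum.inl - z ∘ Sum.inr)) i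
        ≤ ((Ac + Δ) *ᵥ z ∘ Sum.inl + (Δ - Ac) *ᵥ z ∘ Sum.inr) i :=
          mulVec_sub_le_of_abs_sub_le hA (fun j => hz _) (fun j => hz _) i
      _ ≤ bc i - δ i := by simpa using hMz i
      _ ≤ b i := by linarith [(abs_le.mp (hb i)).1]
  · obtain ⟨y, hy, hyM, hyb⟩ := farkas_mulVec_le _ _ hfeas
    rw [vecMul_fromCols] at hyM
    obtain ⟨A, hA, hyA⟩ :=
      exists_abs_sub_le_vecMul_eq_zero hΔ (fun j => hyM (.inl j)) (fun j => hyM (.inr j))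
    exact absurd (hStrong A (bc - δ) hA fun i => by simp [abs_of_nonneg (hδ i)])
      (not_exists_mulVec_le_of_vecMul_eq_zero hy hyA hyb)
end

section
/- Sufficient condition for strong positive definiteness: Let A_c, Δ ∈ ℝ^{n×n} be symmetric with Δ ≥ 0 entrywise. If the smallest eigenvalue of A_c is strictly greater than the spectral radius of Δ, then every symmetric real matrix A with |A − A_c| ≤ Δ entrywise is positive definite. -/
/-!
Write `λ` for the smallest eigenvalue of `A_c` and `|x|` for the entrywise absolute value.
For real `x ≠ 0` and `A` in the interval matrix, `|xᵀ(A - A_c)x| ≤ |x|ᵀΔ|x|`, hence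
`xᵀAx ≥ λ xᵀx - |x|ᵀΔ|x| = |x|ᵀ(λI - Δ)|x| > 0`: every real eigenvalue of `Δ`, being bounded
by its spectral radius, is smaller than `λ`, so `λI - Δ` is positive definite.
-/

open Matrix
open scoped MatrixOrder

namespace Matrix

variable {n : Type*} [Fintype n]

theorem map_mem_spectrum_map {K L : Type*} [Field K] [Field L] [DecidableEq n] (f : K →+* L)
    {A : Matrix n n K} {r : K} (hr : r ∈ spectrum K A) : f r ∈ spectrum L (A.map f) := by
  rw [mem_spectrum_iff_isRoot_charpoly] at hr ⊢
  rw [charpoly_map]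
  exact hr.map

theorem abs_mulVec_le_s19 {R : Type*} [CommRing R] [LinearOrder R] [IsStrictOrderedRing R]
    {E Δ : Matrix n n R} (hE : ∀ i j, |E i j| ≤ Δ i j) (x : n → R) : |E *ᵥ x| ≤ Δ *ᵥ |x| :=
  fun i => calc
    |∑ j, E i j * x j| ≤ ∑ j, |E i j * x j| := Finset.abs_sum_le_sum_abs _ _
    _ ≤ ∑ j, Δ i j * |x j| := Finset.sum_le_sum fun j _ => by
      rw [abs_mul]
      exact mul_le_mul_of_nonneg_right (hE i j) (abs_nonneg _)

theorem abs_dotProduct_mulVec_le {R : Type*} [CommRing R] [LinearOrder R] [IsStrictOrderedRing R]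
    {E Δ : Matrix n n R} (hE : ∀ i j, |E i j| ≤ Δ i j) (x y : n → R) :
    |x ⬝ᵥ E *ᵥ y| ≤ |x| ⬝ᵥ Δ *ᵥ |y| := calc
  |x ⬝ᵥ E *ᵥ y| ≤ ∑ i, |x i * (E *ᵥ y) i| := Finset.abs_sum_le_sum_abs _ _
  _ = |x| ⬝ᵥ |E *ᵥ y| := by simp only [abs_mul, dotProduct, Pi.abs_apply]
  _ ≤ |x| ⬝ᵥ Δ *ᵥ |y| :=
    dotProduct_le_dotProduct_of_nonneg_left (abs_mulVec_le_s19 hE y) (abs_nonneg x)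

theorem abs_dotProduct_abs (x : n → ℝ) : |x| ⬝ᵥ |x| = x ⬝ᵥ x := by
  simp only [dotProduct, Pi.abs_apply, abs_mul_abs_self]

variable [DecidableEq n]

theorem dotProduct_algebraMap_mulVec {R : Type*} [CommSemiring R] (c : R) (x y : n → R) :
    x ⬝ᵥ algebraMap R (Matrix n n R) c *ᵥ y = c * (x ⬝ᵥ y) := by
  rw [Algebra.algebraMap_eq_smul_one, smul_mulVec, one_mulVec, dotProduct_smul, smul_eq_mul]

variable {A : Matrix n n ℝ}

theorem IsHermitian.mul_dotProduct_le_dotProduct_mulVec (hA : A.IsHermitian) {c : ℝ}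
    (hc : ∀ t ∈ spectrum ℝ A, c ≤ t) (x : n → ℝ) : c * (x ⬝ᵥ x) ≤ x ⬝ᵥ A *ᵥ x := by
  have hle : algebraMap ℝ _ c ≤ A := (algebraMap_le_iff_le_spectrum hA.isSelfAdjoint).mpr hc
  simpa only [star_trivial, sub_mulVec, dotProduct_sub, dotProduct_algebraMap_mulVec,
    sub_nonneg] using (le_iff.mp hle).dotProduct_mulVec_nonneg x

theorem IsHermitian.dotProduct_mulVec_lt_mul_dotProduct (hA : A.IsHermitian) {c : ℝ}
    (hc : ∀ t ∈ spectrum ℝ A, t < c) {x : n → ℝ} (hx : x ≠ 0) : x ⬝ᵥ A *ᵥ x < c * (x ⬝ᵥ x) := by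
  have hpos : (algebraMap ℝ _ c - A).PosDef := by
    refine IsStrictlyPositive.posDef
      ((StarOrderedRing.isStrictlyPositive_iff_spectrum_pos (R := ℝ) _ ?_).mpr ?_)
    · exact (IsSelfAdjoint.algebraMap _ (.all c)).sub hA.isSelfAdjoint
    · rw [← spectrum.singleton_sub_eq]
      rintro _ ⟨_, rfl, t, ht, rfl⟩
      exact sub_pos.mpr (hc t ht)
  simpa only [star_trivial, sub_mulVec, dotProduct_sub, dotProduct_algebraMap_mulVec,
    sub_pos] using hpos.dotProduct_mulVec_pos hx

end Matrix

theorem strongly_posDef_of_eigenvalue_condition_general {n : ℕ}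
    (Ac Δ : Matrix (Fin n) (Fin n) ℝ)
    (hAc : Ac.IsHermitian) (hΔsym : Δ.IsHermitian)
    (h : ∀ μ ∈ spectrum ℂ (Δ.map (Complex.ofReal)), ‖μ‖ < ⨅ i, hAc.eigenvalues i) :
    ∀ A : Matrix (Fin n) (Fin n) ℝ, A.IsHermitian →
      (∀ i j, |A i j - Ac i j| ≤ Δ i j) → A.PosDef := by
  intro A hA hbound
  set m := ⨅ i, hAc.eigenvalues i
  have hAc_ge : ∀ t ∈ spectrum ℝ Ac, m ≤ t := by
    rw [hAc.spectrum_real_eq_range_eigenvalues]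
    rintro _ ⟨i, rfl⟩
    exact ciInf_le (Finite.bddBelow_range _) i
  have hΔ_lt : ∀ t ∈ spectrum ℝ Δ, t < m := fun t ht =>
    (le_abs_self t).trans_lt (by simpa using h _ (map_mem_spectrum_map Complex.ofRealHom ht))
  refine .of_dotProduct_mulVec_pos hA fun x hx => ?_
  have hx' : |x| ≠ 0 := by simpa using hx
  have hpert : -(|x| ⬝ᵥ Δ *ᵥ |x|) ≤ x ⬝ᵥ (A - Ac) *ᵥ x :=
    neg_le_of_abs_le (abs_dotProduct_mulVec_le hbound x x)
  rw [star_trivial]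
  calc 0 < m * (x ⬝ᵥ x) - |x| ⬝ᵥ Δ *ᵥ |x| := by
        rw [← abs_dotProduct_abs x]
        exact sub_pos.mpr (hΔsym.dotProduct_mulVec_lt_mul_dotProduct hΔ_lt hx')
    _ ≤ x ⬝ᵥ Ac *ᵥ x + x ⬝ᵥ (A - Ac) *ᵥ x :=
        add_le_add (hAc.mul_dotProduct_le_dotProduct_mulVec hAc_ge x) hpert
    _ = x ⬝ᵥ A *ᵥ x := by rw [sub_mulVec, dotProduct_sub, add_sub_cancel]

/-- Sufficient condition for strong positive definiteness: if the smallest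
eigenvalue of `A_c` is strictly greater than the spectral radius of `Δ` (i.e.
every complex eigenvalue of `Δ` has modulus less than `λ_min(A_c)`), then every
symmetric matrix `A` with `|A - A_c| ≤ Δ` entrywise is positive definite. -/
theorem strongly_posDef_of_eigenvalue_condition {n : ℕ}
    (Ac Δ : Matrix (Fin n) (Fin n) ℝ)
    (hAc : Ac.IsHermitian) (hΔsym : Δ.IsHermitian) (hΔ : ∀ i j, 0 ≤ Δ i j)
    (h : ∀ μ ∈ spectrum ℂ (Δ.map (Complex.ofReal)), ‖μ‖ < ⨅ i, hAc.eigenvalues i) :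
    ∀ A : Matrix (Fin n) (Fin n) ℝ, A.IsHermitian →
      (∀ i j, |A i j - Ac i j| ≤ Δ i j) → A.PosDef :=
  strongly_posDef_of_eigenvalue_condition_general Ac Δ hAc hΔsym h
end
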